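/- arXiv:1506.00224 — 10 statements merged into one kernel-verified Lean document; each statement's English description precedes it below -/
import Mathlib

section
/- Let 𝒯 be a class of topological spaces closed under homeomorphic images and satisfying property (W2). If a nonempty product X = ∏_{i∈I} X_i is a local 𝒯-space, then for every nonempty J ⊆ I the subproduct ∏_{i∈J} X_i is a local 𝒯-space; in particular every factor X_i is a local 𝒯-space. -/
universe u

def IsLocalT (T : ∀ (X : Type u) [TopologicalSpace X], Prop)
    (X : Type u) [TopologicalSpace X] : Prop :=
  ∀ x : X, ∀ U ∈ nhds x, ∃ V ∈ nhds x, V ⊆ U ∧ T ↥V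

def IsLocal1T (T : ∀ (X : Type u) [TopologicalSpace X], Prop)
    (X : Type u) [TopologicalSpace X] : Prop :=
  ∀ x : X, ∃ V ∈ nhds x, T ↥V

def ClosedUnderHomeo (T : ∀ (X : Type u) [TopologicalSpace X], Prop) : Prop :=
  ∀ (X Y : Type u) [TopologicalSpace X] [TopologicalSpace Y], T X → (X ≃ₜ Y) → T Y

def PropW2 (T : ∀ (X : Type u) [TopologicalSpace X], Prop) : Prop :=
  ∀ (A B : Type u) [TopologicalSpace A] [TopologicalSpace B] (a : A) (b : B)
    (S : Set (A × B)), S ∈ nhds (a, b) → T ↥S → ∃ s : Set A, s ∈ nhds a ∧ T ↥s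

def PropW3 (T : ∀ (X : Type u) [TopologicalSpace X], Prop) : Prop :=
  ∀ (A B : Type u) [TopologicalSpace A] [TopologicalSpace B], Nonempty A → Nonempty B →
    ∀ (Bo : Set B), Bo.Nonempty → IsOpen Bo →
    ∀ (S : Set (A × B)), (Set.univ ×ˢ Bo) ⊆ S → T ↥S → T A

def ClosedUnderFinProd (T : ∀ (X : Type u) [TopologicalSpace X], Prop) : Prop :=
  ∀ (A B : Type u) [TopologicalSpace A] [TopologicalSpace B], T A → T B → T (A × B)


open Topology

noncomputable def embImage {X Y : Type u} [TopologicalSpace X] [TopologicalSpace Y]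
    (f : X → Y) (hf : Topology.IsEmbedding f) (s : Set X) : ↥s ≃ₜ ↥(f '' s) :=
  (Topology.IsEmbedding.toHomeomorph (f := f ∘ Subtype.val) (hf.comp Topology.IsEmbedding.subtypeVal)).trans
    (Homeomorph.setCongr (by rw [Set.range_comp, Subtype.range_val]))

theorem isLocalT_of_homeo (T : ∀ (X : Type u) [TopologicalSpace X], Prop)
    (hHomeo : ClosedUnderHomeo T) {A B : Type u} [TopologicalSpace A] [TopologicalSpace B]
    (e : A ≃ₜ B) (h : IsLocalT T A) : IsLocalT T B := by
  intro y U hU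
  obtain ⟨V, hVn, hVU, hTV⟩ := h (e.symm y) (e ⁻¹' U)
    (e.continuous.continuousAt.preimage_mem_nhds (by simpa using hU))
  refine ⟨e '' V, ?_, ?_, hHomeo _ _ hTV (e.image V)⟩
  · have := e.isOpenMap.image_mem_nhds hVn
    simpa using this
  · rintro _ ⟨v, hv, rfl⟩; exact hVU hv
theorem subprod_local (T : ∀ (X : Type u) [TopologicalSpace X], Prop)
    (hHomeo : ClosedUnderHomeo T) (hW2 : PropW2 T)
    (I : Type u) (X : I → Type u) [∀ i, TopologicalSpace (X i)]
    (hne : Nonempty (∀ i, X i))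
    (hloc : IsLocalT T (∀ i, X i)) (J : Set I) :
    IsLocalT T (∀ j : J, X j.1) := by
  classical
  set A := ∀ j : J, X j.1
  set B := ∀ j : {i // i ∉ J}, X j.1
  let e : (∀ i, X i) ≃ₜ A × B := Homeomorph.piEquivPiSubtypeProd (· ∈ J) X
  intro x U hU
  obtain ⟨W, hWU, hWo, hxW⟩ := mem_nhds_iff.mp hU
  obtain ⟨z⟩ := hne
  let b : B := fun j => z j.1
  let y : ∀ i, X i := e.symm (x, b)
  have hWn : W ∈ 𝓝 x := hWo.mem_nhds hxW
  have hprod : W ×ˢ (Set.univ : Set B) ∈ 𝓝 ((x, b) : A × B) :=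
    prod_mem_nhds hWn Filter.univ_mem
  have hey : e y = (x, b) := e.apply_symm_apply _
  have hpre : e ⁻¹' (W ×ˢ (Set.univ : Set B)) ∈ 𝓝 y :=
    e.continuous.continuousAt.preimage_mem_nhds (hey ▸ hprod)
  obtain ⟨V', hV'n, hV'sub, hTV'⟩ := hloc y _ hpre
  set S : Set (A × B) := e '' V' with hS
  have hTS : T ↥S := hHomeo _ _ hTV' (e.image V')
  have hSn : S ∈ 𝓝 ((x, b) : A × B) := by
    have h := e.isOpenMap.image_mem_nhds hV'n
    rwa [hey] at h
  have hSsub : S ⊆ W ×ˢ (Set.univ : Set B) := by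
    rintro _ ⟨v, hv, rfl⟩; exact hV'sub hv
  -- pull back along the open embedding ↥W × B → A × B
  let f : ↥W × B → A × B := Prod.map Subtype.val id
  have hf : Topology.IsEmbedding f :=
    Topology.IsEmbedding.subtypeVal.prodMap Topology.IsEmbedding.id
  let x₀ : ↥W := ⟨x, hxW⟩
  set S₀ : Set (↥W × B) := f ⁻¹' S with hS₀def
  have hS₀n : S₀ ∈ 𝓝 ((x₀, b) : ↥W × B) := by
    have hc : Continuous f := hf.continuous
    exact hc.continuousAt.preimage_mem_nhds hSn
  have himg : f '' S₀ = S := by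
    apply Set.image_preimage_eq_of_subset
    intro p hp
    rcases hSsub hp with ⟨hp1, -⟩
    exact ⟨(⟨p.1, hp1⟩, p.2), by simp [f]⟩
  have hTS₀ : T ↥S₀ := by
    have h1 : ↥S₀ ≃ₜ ↥(f '' S₀) := embImage f hf S₀
    have h2 : ↥(f '' S₀) ≃ₜ ↥S := Homeomorph.setCongr himg
    exact hHomeo _ _ hTS (h1.trans h2).symm
  obtain ⟨s, hsn, hTs⟩ := hW2 (↥W) B x₀ b S₀ hS₀n hTS₀
  refine ⟨Subtype.val '' s, ?_, ?_, ?_⟩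
  · exact hWo.isOpenMap_subtype_val.image_mem_nhds hsn
  · rintro _ ⟨v, -, rfl⟩; exact hWU v.2
  · exact hHomeo _ _ hTs (embImage Subtype.val Topology.IsEmbedding.subtypeVal s)

def singletonPiHomeo {I : Type u} (X : I → Type u) [∀ i, TopologicalSpace (X i)] (i : I) :
    ((j : ({i} : Set I)) → X j.1) ≃ₜ X i where
  toFun g := g ⟨i, rfl⟩
  invFun x j := cast (congrArg X j.2).symm x
  left_inv g := funext fun j => by
    rcases j with ⟨j, hj⟩
    have hj' : j = i := hj
    subst hj'
    rfl
  right_inv x := rfl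
  continuous_toFun := continuous_apply _
  continuous_invFun := continuous_pi fun j => by
    rcases j with ⟨j, hj⟩
    have hj' : j = i := hj
    subst hj'
    exact continuous_id

theorem stmt5 (T : ∀ (X : Type u) [TopologicalSpace X], Prop)
    (hHomeo : ClosedUnderHomeo T) (hW2 : PropW2 T)
    (I : Type u) (X : I → Type u) [∀ i, TopologicalSpace (X i)]
    (hne : Nonempty (∀ i, X i))
    (hloc : IsLocalT T (∀ i, X i)) :
    (∀ J : Set I, J.Nonempty → IsLocalT T (∀ j : J, X j.1)) ∧
    (∀ i : I, IsLocalT T (X i)) := by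
  refine ⟨fun J _ => subprod_local T hHomeo hW2 I X hne hloc J, fun i => ?_⟩
  exact isLocalT_of_homeo T hHomeo (singletonPiHomeo X i)
    (subprod_local T hHomeo hW2 I X hne hloc {i})
end

section
/- Let 𝒯 be a class of topological spaces closed under homeomorphic images and satisfying property (W3). If X = ∏_{i∈I} X_i is a nonempty product containing a subset T ∈ 𝒯 such that T contains some nonempty open subset of X, then there is a finite F ⊆ I such that the cofinite subproduct ∏_{i∈I∖F} X_i belongs to 𝒯. -/
universe u

theorem stmt6 (T : ∀ (X : Type u) [TopologicalSpace X], Prop)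
    (hHomeo : ClosedUnderHomeo T) (hW3 : PropW3 T)
    (I : Type u) (X : I → Type u) [∀ i, TopologicalSpace (X i)]
    (hne : Nonempty (∀ i, X i))
    (S : Set (∀ i, X i)) (hS : T ↥S)
    (O : Set (∀ i, X i)) (hO : IsOpen O) (hOne : O.Nonempty) (hOS : O ⊆ S) :
    ∃ F : Finset I, T (∀ i : {i : I // i ∉ F}, X i.1) := by
  classical
  obtain ⟨f, hfO⟩ := hOne
  obtain ⟨F, u, hu, hpi⟩ := isOpen_pi_iff.mp hO f hfO
  refine ⟨F, ?_⟩
  set p : I → Prop := fun i => i ∉ F with hp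
  let e : (∀ i, X i) ≃ₜ (∀ i : {i // p i}, X i.1) × (∀ i : {i // ¬ p i}, X i.1) :=
    Homeomorph.piEquivPiSubtypeProd p X
  haveI : Finite {i : I // ¬ p i} :=
    Finite.of_injective (fun x => (⟨x.1, not_not.mp x.2⟩ : {i // i ∈ F}))
      (fun a b h => by simpa [Subtype.ext_iff] using h)
  set Bo : Set (∀ i : {i // ¬ p i}, X i.1) := Set.univ.pi (fun i => u i.1) with hBo
  have hBoOpen : IsOpen Bo :=
    isOpen_set_pi Set.finite_univ (fun i _ => (hu i.1 (not_not.mp i.2)).1)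
  have hBoNe : Bo.Nonempty :=
    ⟨fun i => f i.1, fun i _ => (hu i.1 (not_not.mp i.2)).2⟩
  have hA : Nonempty (∀ i : {i // p i}, X i.1) := ⟨fun i => hne.some i.1⟩
  have hB : Nonempty (∀ i : {i // ¬ p i}, X i.1) := ⟨fun i => hne.some i.1⟩
  have hTS' : T ↥(e '' S) := hHomeo _ _ hS (e.image S)
  refine hW3 _ _ hA hB Bo hBoNe hBoOpen (e '' S) ?_ hTS'
  rintro ⟨a, b⟩ ⟨-, hb⟩
  refine ⟨e.symm (a, b), hOS (hpi ?_), e.apply_symm_apply _⟩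
  intro i hi
  have hkey : e.symm (a, b) i = b ⟨i, not_not.mpr hi⟩ := by
    simp only [e, Homeomorph.piEquivPiSubtypeProd, Homeomorph.homeomorph_mk_coe_symm,
      Equiv.piEquivPiSubtypeProd_symm_apply]
    exact dif_neg (not_not.mpr hi)
  rw [hkey]
  exact hb ⟨i, not_not.mpr hi⟩ trivial
end

section
/- Let 𝒯 be a class of topological spaces closed under homeomorphic images and under finite products, and satisfying property (W3'): if A × B ∈ 𝒯 for nonempty A, B, then A ∈ 𝒯. If X = ∏_{i∈I} X_i is a nonempty product with X ∈ 𝒯 and every factor X_i is a local 𝒯-space, then X is a local 𝒯-space. -/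
universe u

/-- Homeomorphism between `univ.pi s` and the pi type of subtypes. -/
def homeoUnivPi {ι : Type*} {β : ι → Type*} [∀ i, TopologicalSpace (β i)]
    (s : ∀ i, Set (β i)) : ↥(Set.univ.pi s) ≃ₜ ∀ i, ↥(s i) where
  toEquiv := Equiv.Set.univPi s
  continuous_toFun := continuous_pi fun i =>
    Continuous.subtype_mk ((continuous_apply i).comp continuous_subtype_val) _
  continuous_invFun := Continuous.subtype_mk
    (continuous_pi fun i => continuous_subtype_val.comp (continuous_apply i)) _

/-- Homeomorphism for Option-indexed pi types. -/
def homeoPiOption {α : Type*} {β : Option α → Type*} [∀ i, TopologicalSpace (β i)] :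
    (∀ i, β i) ≃ₜ β none × ∀ a, β (some a) where
  toEquiv := Equiv.piOptionEquivProd
  continuous_toFun := Continuous.prodMk (continuous_apply none)
    (continuous_pi fun a => continuous_apply (some a))
  continuous_invFun := continuous_pi fun i => by
    cases i with
    | none => exact continuous_fst
    | some a => exact (continuous_apply a).comp continuous_snd

/-- Finite products (pi over a fintype) of spaces in `T` are in `T`. -/
lemma aux_finPi (T : ∀ (X : Type u) [TopologicalSpace X], Prop)
    (hHomeo : ClosedUnderHomeo T) (hFinProd : ClosedUnderFinProd T)
    (hUnit : T PUnit.{u+1}) :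
    ∀ (α : Type u) [Fintype α] (Y : α → Type u) [∀ a, TopologicalSpace (Y a)],
      (∀ a, T (Y a)) → T (∀ a, Y a) := by
  intro α inst
  revert inst
  refine Fintype.induction_empty_option
    (P := fun α _ => ∀ (Y : α → Type u) [∀ a, TopologicalSpace (Y a)],
      (∀ a, T (Y a)) → T (∀ a, Y a)) ?_ ?_ ?_ α
  · intro α β _ e h Y _ hY
    exact hHomeo _ _ (h (fun a => Y (e a)) fun a => hY (e a)) (Homeomorph.piCongrLeft e)
  · intro Y _ _
    exact hHomeo PUnit.{u+1} _ hUnit (Homeomorph.homeomorphOfUnique PUnit.{u+1} _)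
  · intro α _ ih Y _ hY
    exact hHomeo _ _ (hFinProd _ _ (hY none) (ih (fun a => Y (some a)) fun a => hY (some a)))
      homeoPiOption.symm

theorem stmt7 (T : ∀ (X : Type u) [TopologicalSpace X], Prop)
    (hHomeo : ClosedUnderHomeo T) (hFinProd : ClosedUnderFinProd T)
    (hW3' : ∀ (A B : Type u) [TopologicalSpace A] [TopologicalSpace B],
      Nonempty A → Nonempty B → T (A × B) → T A)
    (I : Type u) (X : I → Type u) [∀ i, TopologicalSpace (X i)]
    (hne : Nonempty (∀ i, X i)) (hX : T (∀ i, X i))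
    (hloc : ∀ i, IsLocalT T (X i)) :
    IsLocalT T (∀ i, X i) := by
  have hPU : T PUnit.{u+1} := hW3' PUnit.{u+1} (∀ i, X i) ⟨PUnit.unit⟩ hne
    (hHomeo _ _ hX ((Homeomorph.prodPUnit _).symm.trans (Homeomorph.prodComm _ _)))
  classical
  intro x U hU
  rw [nhds_pi] at hU
  obtain ⟨F, t, ht, htU⟩ := Filter.mem_pi'.mp hU
  choose V hVmem hVsub hVT using fun i => hloc i (x i) (t i) (ht i)
  set W : ∀ i, Set (X i) := fun i => if i ∈ F then V i else Set.univ with hW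
  have heq : Set.univ.pi W = (↑F : Set I).pi V := by
    ext y
    simp only [Set.mem_pi, Set.mem_univ, forall_true_left, Finset.mem_coe, hW]
    constructor
    · intro h i hi
      have := h i
      rwa [if_pos hi] at this
    · intro h i
      split_ifs with hi
      · exact h i hi
      · exact Set.mem_univ _
  refine ⟨Set.univ.pi W, ?_, ?_, ?_⟩
  · rw [heq]
    exact set_pi_mem_nhds F.finite_toSet fun i _ => hVmem i
  · rw [heq]
    exact (Set.pi_mono fun i _ => hVsub i).trans htU
  · -- T holds for the neighborhood
    have hT1 : T (∀ i : {i // i ∈ F}, ↥(W i.1)) := by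
      refine aux_finPi T hHomeo hFinProd hPU _ _ fun i => ?_
      exact hHomeo _ _ (hVT i.1) (Homeomorph.setCongr (by simp [hW, i.2])).symm
    have hT2 : T (∀ i : {i // ¬ i ∈ F}, X i.1) := by
      refine hW3' _ (∀ i : {i // i ∈ F}, X i.1) ?_ ?_ ?_
      · exact hne.map fun f i => f i.1
      · exact hne.map fun f i => f i.1
      · refine hHomeo _ _ hX ?_
        exact (Homeomorph.piEquivPiSubtypeProd (fun i => ¬ i ∈ F) X).trans
          (Homeomorph.prodCongr (Homeomorph.refl _)
            (Homeomorph.piCongrLeft (Y := fun i : {i // ¬¬ i ∈ F} => X i.1)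
              (Equiv.subtypeEquivRight fun i => not_not.symm)).symm)
    have hT3 : T (∀ i : {i // ¬ i ∈ F}, ↥(W i.1)) := by
      refine hHomeo _ _ hT2 (Homeomorph.piCongrRight fun i => ?_)
      exact ((Homeomorph.Set.univ (X i.1)).symm.trans
        (Homeomorph.setCongr (by simp [hW, i.2])))
    refine hHomeo _ _ (hFinProd _ _ hT1 hT3) ?_
    exact ((Homeomorph.piEquivPiSubtypeProd (fun i => i ∈ F) fun i => ↥(W i)).symm.trans
      (homeoUnivPi W).symm)
end

section
/- Let 𝒯 be a class of topological spaces closed under homeomorphic images and under finite products, satisfying properties (W2) and (W3), and let X = ∏_{i∈I} X_i be a nonempty product. Then X is a local 𝒯-space if and only if every factor X_i is a local 𝒯-space and there is a finite F ⊆ I such that ∏_{i∈I∖F} X_i ∈ 𝒯. -/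
universe u

open Set Topology

noncomputable def embImageHomeo {Y Z : Type u} [TopologicalSpace Y] [TopologicalSpace Z]
    (f : Y → Z) (hf : IsEmbedding f) (s : Set Y) : ↥s ≃ₜ ↥(f '' s) :=
  (IsEmbedding.toHomeomorph (hf.comp IsEmbedding.subtypeVal)).trans
    (Homeomorph.setCongr (by rw [Set.range_comp, Subtype.range_val]))

def prodUniqueHomeo (Z W : Type u) [TopologicalSpace Z] [TopologicalSpace W] [Unique W] :
    Z × W ≃ₜ Z where
  toFun := Prod.fst
  invFun z := (z, default)
  left_inv p := by cases p; simp [Unique.eq_default]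
  right_inv z := rfl
  continuous_toFun := continuous_fst
  continuous_invFun := continuous_id.prodMk continuous_const

def univPiHomeo {ι : Type u} {g : ι → Type u} [∀ i, TopologicalSpace (g i)] (V : ∀ i, Set (g i)) :
    ↥(Set.pi Set.univ V) ≃ₜ ∀ i, ↥(V i) where
  toEquiv := Equiv.Set.univPi V
  continuous_toFun := continuous_pi fun i =>
    ((continuous_apply i).comp continuous_subtype_val).subtype_mk _
  continuous_invFun := Continuous.subtype_mk (continuous_pi fun i =>
    continuous_subtype_val.comp (continuous_apply i)) _

noncomputable def piInsertHomeo {I' : Type u} {g : I' → Type u} [∀ i, TopologicalSpace (g i)]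
    [DecidableEq I'] {a : I'} {s : Finset I'} (ha : a ∉ s) :
    (∀ i : {i // i ∈ insert a s}, g i.1) ≃ₜ g a × ∀ i : {i // i ∈ s}, g i.1 :=
  let κ := {i : I' // i ∈ insert a s}
  let j₀ : κ := ⟨a, Finset.mem_insert_self a s⟩
  let c : {i // i ∈ s} ≃ {j : κ // j ≠ j₀} :=
  { toFun := fun i => ⟨⟨i.1, Finset.mem_insert_of_mem i.2⟩, fun h => ha (by
      have h2 : i.1 = a := congrArg Subtype.val h
      exact h2 ▸ i.2)⟩
    invFun := fun j => ⟨j.1.1, by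
      rcases Finset.mem_insert.mp j.1.2 with h | h
      · exact absurd (Subtype.ext h) j.2
      · exact h⟩
    left_inv := fun i => Subtype.ext rfl
    right_inv := fun j => Subtype.ext (Subtype.ext rfl) }
  (Homeomorph.piSplitAt j₀ (fun j : κ => g j.1)).trans
    ((Homeomorph.refl (g a)).prodCongr
      (Homeomorph.piCongrLeft (Y := fun j : {j : κ // j ≠ j₀} => g j.1.1) c).symm)

theorem TprodFinset (T : ∀ (X : Type u) [TopologicalSpace X], Prop)
    (hHomeo : ClosedUnderHomeo T) (hFinProd : ClosedUnderFinProd T)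
    {I' : Type u} (g : I' → Type u) [∀ i, TopologicalSpace (g i)] (s : Finset I') :
    ∀ (Z : Type u) [TopologicalSpace Z], T Z → (∀ i ∈ s, T (g i)) →
      T (Z × ∀ i : {i // i ∈ s}, g i.1) := by
  classical
  induction s using Finset.induction_on with
  | empty =>
      intro Z _ hZ _
      haveI : IsEmpty {i : I' // i ∈ (∅ : Finset I')} :=
        ⟨fun i => Finset.notMem_empty i.1 i.2⟩
      exact hHomeo Z _ hZ (prodUniqueHomeo Z _).symm
  | @insert a s ha ih =>
      intro Z _ hZ hg
      have hZa : T (Z × g a) := hFinProd _ _ hZ (hg a (Finset.mem_insert_self a s))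
      have h2 := ih (Z × g a) hZa (fun i hi => hg i (Finset.mem_insert_of_mem hi))
      exact hHomeo _ _ h2 ((Homeomorph.prodAssoc Z (g a) _).trans
        ((Homeomorph.refl Z).prodCongr (piInsertHomeo ha).symm))

theorem stmt9 (T : ∀ (X : Type u) [TopologicalSpace X], Prop)
    (hHomeo : ClosedUnderHomeo T) (hFinProd : ClosedUnderFinProd T)
    (hW2 : PropW2 T) (hW3 : PropW3 T)
    (I : Type u) (X : I → Type u) [∀ i, TopologicalSpace (X i)]
    (hne : Nonempty (∀ i, X i)) :
    IsLocalT T (∀ i, X i) ↔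
      (∀ i, IsLocalT T (X i)) ∧ ∃ F : Finset I, T (∀ i : {i : I // i ∉ F}, X i.1) := by
  classical
  obtain ⟨x₀⟩ := hne
  constructor
  · intro hloc
    constructor
    · -- each factor is a local T-space
      intro i₀ a U hU
      set x : ∀ i, X i := Function.update x₀ i₀ a with hxdef
      have hxi : x i₀ = a := Function.update_self i₀ a x₀
      have hU' : ((fun y : ∀ i, X i => y i₀) ⁻¹' U) ∈ nhds x :=
        (continuous_apply i₀).continuousAt.preimage_mem_nhds (by rwa [hxi])
      obtain ⟨V, hVx, hVU, hTV⟩ := hloc x _ hU'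
      set e := Homeomorph.piSplitAt i₀ X with hedef
      have hSnhds : e '' V ∈ nhds (e x) := by
        rw [← e.map_nhds_eq x]; exact Filter.image_mem_map hVx
      have haU : a ∈ U := mem_of_mem_nhds hU
      set f : ↥U × (∀ j : {j // j ≠ i₀}, X j.1) → X i₀ × (∀ j : {j // j ≠ i₀}, X j.1) :=
        Prod.map Subtype.val id with hfdef
      have hfemb : IsEmbedding f := IsEmbedding.subtypeVal.prodMap IsEmbedding.id
      have hSsub : e '' V ⊆ U ×ˢ Set.univ := by
        rintro _ ⟨y, hy, rfl⟩
        exact ⟨hVU hy, trivial⟩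
      have h1 : e x = (x i₀, fun j : {j // j ≠ i₀} => x j.1) := rfl
      set q : ↥U × (∀ j : {j // j ≠ i₀}, X j.1) :=
        (⟨a, haU⟩, fun j : {j // j ≠ i₀} => x j.1) with hqdef
      have hfq : f q = e x := by rw [h1, hxi]; rfl
      have hS' : f ⁻¹' (e '' V) ∈ nhds q :=
        hfemb.continuous.continuousAt.preimage_mem_nhds (by rw [hfq]; exact hSnhds)
      have hTS : T ↥(e '' V) := hHomeo _ _ hTV (embImageHomeo e e.isEmbedding V)
      have himg : f '' (f ⁻¹' (e '' V)) = e '' V := by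
        apply Set.image_preimage_eq_of_subset
        intro z hz
        rcases hSsub hz with ⟨hz1, -⟩
        exact ⟨(⟨z.1, hz1⟩, z.2), Prod.ext rfl rfl⟩
      have hTS' : T ↥(f ⁻¹' (e '' V)) := hHomeo _ _ hTS
        ((embImageHomeo f hfemb _).trans (Homeomorph.setCongr himg)).symm
      obtain ⟨s, hs, hTs⟩ := hW2 _ _ q.1 q.2 _ hS' hTS'
      refine ⟨Subtype.val '' s, ?_, ?_, ?_⟩
      · rcases (mem_nhds_subtype U q.1 s).mp hs with ⟨u, hu, hus⟩
        have hsub : u ∩ U ⊆ Subtype.val '' s := fun z hz => ⟨⟨z, hz.2⟩, hus hz.1, rfl⟩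
        exact Filter.mem_of_superset (Filter.inter_mem hu hU) hsub
      · rintro _ ⟨w, -, rfl⟩; exact w.2
      · exact hHomeo _ _ hTs (embImageHomeo Subtype.val IsEmbedding.subtypeVal s)
    · -- existence of the finite set F
      obtain ⟨V, hVx, -, hTV⟩ := hloc x₀ Set.univ Filter.univ_mem
      rw [nhds_pi, Filter.mem_pi'] at hVx
      obtain ⟨F, t, ht, htV⟩ := hVx
      choose O hOsub hOopen hOx using fun i => mem_nhds_iff.mp (ht i)
      haveI : Finite {i : I // ¬ i ∉ F} := Finite.of_injective
        (fun j => (⟨j.1, not_not.mp j.2⟩ : {i // i ∈ F}))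
        (by intro j k h; exact Subtype.ext (congrArg (fun z : {i // i ∈ F} => z.1) h))
      set e := Homeomorph.piEquivPiSubtypeProd (fun i => i ∉ F) X with hedef
      refine ⟨F, hW3 _ _ ⟨fun i => x₀ i.1⟩ ⟨fun i => x₀ i.1⟩
        (Set.pi Set.univ fun j : {i : I // ¬ i ∉ F} => O j.1)
        ⟨fun j => x₀ j.1, fun j _ => hOx j.1⟩
        (isOpen_set_pi Set.finite_univ fun j _ => hOopen j.1)
        (e '' V) ?_ (hHomeo _ _ hTV (embImageHomeo e e.isEmbedding V))⟩
      rintro ⟨a, b⟩ ⟨-, hb⟩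
      refine ⟨e.symm (a, b), ?_, e.apply_symm_apply _⟩
      apply htV
      intro i hi
      have hi' : ¬ (i ∉ F) := not_not.mpr hi
      have hval : (e.symm (a, b)) i = b ⟨i, hi'⟩ := by
        rw [hedef, Homeomorph.piEquivPiSubtypeProd_symm_apply, dif_neg hi']
      rw [hval]
      exact hOsub i (hb ⟨i, hi'⟩ (Set.mem_univ _))
  · rintro ⟨hloc, F, hTF⟩
    have hrestr : ∀ E : Finset I, F ⊆ E → T (∀ i : {i : I // i ∉ E}, X i.1) := by
      intro E hFE
      set J := {i : I // i ∉ F} with hJdef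
      set e := Homeomorph.piEquivPiSubtypeProd (fun j : J => j.1 ∉ E) (fun j : J => X j.1)
        with hedef
      have hAB : T ((∀ j : {j : J // j.1 ∉ E}, X j.1.1) × (∀ j : {j : J // ¬ j.1 ∉ E}, X j.1.1)) :=
        hHomeo _ _ hTF e
      have hA' : T (∀ j : {j : J // j.1 ∉ E}, X j.1.1) :=
        hW3 (∀ j : {j : J // j.1 ∉ E}, X j.1.1) (∀ j : {j : J // ¬ j.1 ∉ E}, X j.1.1)
          ⟨fun j => x₀ j.1.1⟩ ⟨fun j => x₀ j.1.1⟩ Set.univ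
          ⟨fun j => x₀ j.1.1, trivial⟩ isOpen_univ Set.univ (fun z _ => trivial)
          (hHomeo _ _ hAB (Homeomorph.Set.univ _).symm)
      let c : {i : I // i ∉ E} ≃ {j : J // j.1 ∉ E} :=
        { toFun := fun i => ⟨⟨i.1, fun h => i.2 (hFE h)⟩, i.2⟩
          invFun := fun j => ⟨j.1.1, j.2⟩
          left_inv := fun i => Subtype.ext rfl
          right_inv := fun j => Subtype.ext (Subtype.ext rfl) }
      exact hHomeo _ _ hA'
        (Homeomorph.piCongrLeft (Y := fun j : {j : J // j.1 ∉ E} => X j.1.1) c).symm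
    intro x U hU
    rw [nhds_pi, Filter.mem_pi'] at hU
    obtain ⟨G, t, ht, htU⟩ := hU
    choose V hVmem hVsub hTV using fun i => hloc i (x i) (t i) (ht i)
    set E := F ∪ G with hEdef
    refine ⟨Set.pi ↑E V, set_pi_mem_nhds E.finite_toSet (fun i _ => hVmem i), ?_, ?_⟩
    · intro y hy
      apply htU
      intro i hi
      exact hVsub i (hy i (Finset.mem_coe.mpr (Finset.mem_union_right F hi)))
    · set e := Homeomorph.piEquivPiSubtypeProd (fun i => i ∉ E) X with hedef
      set A := ∀ i : {i : I // i ∉ E}, X i.1 with hAdef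
      have hTA : T A := hrestr E Finset.subset_union_left
      have himg : e '' (Set.pi ↑E V) =
          Set.univ ×ˢ (Set.pi Set.univ fun j : {i : I // ¬ i ∉ E} => V j.1) := by
        rw [show e '' (Set.pi ↑E V) = e.symm ⁻¹' (Set.pi ↑E V) from
          e.toEquiv.image_eq_preimage_symm _]
        ext ⟨a, b⟩
        simp only [Set.mem_preimage, Set.mem_pi, Set.mem_prod, Set.mem_univ, true_and,
          Finset.mem_coe]
        constructor
        · intro h j _
          have h2 := h j.1 (not_not.mp j.2)
          rwa [hedef, Homeomorph.piEquivPiSubtypeProd_symm_apply, dif_neg j.2] at h2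
        · intro h i hi
          have hi' : ¬ i ∉ E := not_not.mpr hi
          rw [hedef, Homeomorph.piEquivPiSubtypeProd_symm_apply, dif_neg hi']
          exact h ⟨i, hi'⟩ trivial
      let ee : {i : I // i ∈ E} ≃ {i : I // ¬ i ∉ E} :=
        { toFun := fun i => ⟨i.1, not_not.mpr i.2⟩
          invFun := fun j => ⟨j.1, not_not.mp j.2⟩
          left_inv := fun i => Subtype.ext rfl
          right_inv := fun j => Subtype.ext rfl }
      have hTpi : T (A × ∀ i : {i : I // i ∈ E}, ↥(V i.1)) :=
        TprodFinset T hHomeo hFinProd (fun i => ↥(V i)) E A hTA (fun i _ => hTV i)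
      have h1 : ↥(Set.pi ↑E V) ≃ₜ A × ∀ j : {i : I // ¬ i ∉ E}, ↥(V j.1) :=
        ((embImageHomeo e e.isEmbedding _).trans (Homeomorph.setCongr himg)).trans
          ((Homeomorph.Set.prod _ _).trans
            ((Homeomorph.Set.univ A).prodCongr (univPiHomeo _)))
      have h2 : (∀ i : {i : I // i ∈ E}, ↥(V i.1)) ≃ₜ (∀ j : {i : I // ¬ i ∉ E}, ↥(V j.1)) :=
        Homeomorph.piCongrLeft (Y := fun j : {i : I // ¬ i ∉ E} => ↥(V j.1)) ee
      exact hHomeo _ _ hTpi (((Homeomorph.refl A).prodCongr h2).trans h1.symm)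
end

section
/- Let 𝒯 be a class of topological spaces closed under homeomorphic images, arbitrary products, and finite products, satisfying (W2) and (W3). Then a nonempty product X = ∏_{i∈I} X_i is a local 𝒯-space if and only if every countable subproduct ∏_{i∈J} X_i (J ⊆ I countable nonempty) is a local 𝒯-space. -/
universe u

section Helpers

open Set Filter Topology

/-- The image of a set under a topological embedding, as a homeomorphism. -/
noncomputable def embHomeoImage {X Y : Type*} [TopologicalSpace X] [TopologicalSpace Y]
    {f : X → Y} (hf : Topology.IsEmbedding f) (t : Set X) : t ≃ₜ (f '' t) where
  toEquiv := Equiv.Set.image f t hf.injective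
  continuous_toFun := (hf.continuous.comp continuous_subtype_val).subtype_mk _
  continuous_invFun := by
    have hind : Topology.IsInducing (⇑(Equiv.Set.image f t hf.injective)) := by
      refine (Topology.IsInducing.subtypeVal.of_comp_iff).1 ?_
      have h : (Subtype.val ∘ ⇑(Equiv.Set.image f t hf.injective)) = fun p : t => f p.1 := rfl
      rw [h]
      exact hf.isInducing.comp Topology.IsInducing.subtypeVal
    show Continuous ⇑(Equiv.Set.image f t hf.injective).symm
    rw [hind.continuous_iff]
    have h : (⇑(Equiv.Set.image f t hf.injective)) ∘ ⇑(Equiv.Set.image f t hf.injective).symm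
        = id := funext fun p => Equiv.apply_symm_apply _ p
    rw [h]
    exact continuous_id

theorem exists_finite_pi_subset {ι : Type*} {Y : ι → Type*} [∀ i, TopologicalSpace (Y i)]
    {x : ∀ i, Y i} {U : Set (∀ i, Y i)} (hU : U ∈ nhds x) :
    ∃ (F : Set ι) (O : ∀ i, Set (Y i)), F.Finite ∧ (∀ i, IsOpen (O i)) ∧ (∀ i, x i ∈ O i) ∧
      F.pi O ⊆ U := by
  rw [nhds_pi, Filter.mem_pi] at hU
  obtain ⟨F, hF, t, ht, hsub⟩ := hU
  have h : ∀ i, ∃ O : Set (Y i), IsOpen O ∧ x i ∈ O ∧ O ⊆ t i := fun i => by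
    rcases mem_nhds_iff.1 (ht i) with ⟨O, hOt, hOopen, hxO⟩
    exact ⟨O, hOopen, hxO, hOt⟩
  choose O hO hxO hOt using h
  exact ⟨F, O, hF, hO, hxO, subset_trans (Set.pi_mono fun i _ => hOt i) hsub⟩

variable {I : Type u} (X : I → Type u) [∀ i, TopologicalSpace (X i)] (p : I → Prop)

def restr : (∀ i, X i) → (∀ j : {i // p i}, X j.1) := fun x j => x j.1

theorem continuous_restr : Continuous (restr X p) := continuous_pi fun j => continuous_apply j.1

def cyl (s : Set (∀ j : {i // p i}, X j.1)) : Set (∀ i, X i) := restr X p ⁻¹' s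

theorem cyl_mem_nhds {x : ∀ i, X i} {s : Set (∀ j : {i // p i}, X j.1)}
    (hs : s ∈ nhds (restr X p x)) : cyl X p s ∈ nhds x :=
  (continuous_restr X p).continuousAt.preimage_mem_nhds hs

variable (T : ∀ (X : Type u) [TopologicalSpace X], Prop)

theorem T_cyl [DecidablePred p] (hHomeo : ClosedUnderHomeo T) (hFinProd : ClosedUnderFinProd T)
    {s : Set (∀ j : {i // p i}, X j.1)} (hs : T ↥s)
    (hrest : T (∀ j : {i // ¬ p i}, X j.1)) : T ↥(cyl X p s) := by
  set e := Homeomorph.piEquivPiSubtypeProd p X with he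
  have hpre : cyl X p s = ⇑e ⁻¹' (s ×ˢ Set.univ) := by
    ext x
    exact Iff.symm (and_iff_left trivial)
  have h1 : T ↥(s ×ˢ (Set.univ : Set (∀ j : {i // ¬ p i}, X j.1))) := by
    have h2 := hFinProd _ _ hs (hHomeo _ _ hrest (Homeomorph.Set.univ _).symm)
    exact hHomeo _ _ h2 (Homeomorph.Set.prod s Set.univ).symm
  have himg : ⇑e.symm '' (s ×ˢ Set.univ) = cyl X p s := by
    rw [hpre]
    exact Equiv.image_eq_preimage_symm e.symm.toEquiv _
  exact hHomeo _ _ h1 ((e.symm.image _).trans (Homeomorph.setCongr himg))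

theorem lemA (hHomeo : ClosedUnderHomeo T) (hW2 : PropW2 T)
    {A B : Type u} [TopologicalSpace A] [TopologicalSpace B] {P : Set A} (hP : IsOpen P)
    {a : A} (haP : a ∈ P) (b : B) {S : Set (A × B)} (hS : S ∈ nhds (a, b))
    (hSP : S ⊆ P ×ˢ Set.univ) (hT : T ↥S) :
    ∃ s : Set A, s ∈ nhds a ∧ s ⊆ P ∧ T ↥s := by
  set ι : ↥P × B → A × B := Prod.map Subtype.val id with hι
  have hemb : Topology.IsEmbedding ι :=
    Topology.IsEmbedding.subtypeVal.prodMap Topology.IsEmbedding.id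
  set S' : Set (↥P × B) := ι ⁻¹' S with hS'def
  have hS' : S' ∈ nhds ((⟨a, haP⟩ : ↥P), b) :=
    hemb.continuous.continuousAt.preimage_mem_nhds (by exact hS)
  have himg : ι '' S' = S := by
    refine Set.image_preimage_eq_of_subset fun z hz => ?_
    exact ⟨(⟨z.1, (hSP hz).1⟩, z.2), rfl⟩
  have hTS' : T ↥S' :=
    hHomeo _ _ hT ((Homeomorph.setCongr himg.symm).trans (embHomeoImage hemb S').symm)
  obtain ⟨s', hs'n, hs'T⟩ := hW2 (↥P) B ⟨a, haP⟩ b S' hS' hTS'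
  refine ⟨Subtype.val '' s', ?_, ?_, ?_⟩
  · have h := hP.isOpenEmbedding_subtypeVal.map_nhds_eq (⟨a, haP⟩ : ↥P)
    rw [show nhds a = Filter.map Subtype.val (nhds (⟨a, haP⟩ : ↥P)) from h.symm]
    exact Filter.image_mem_map hs'n
  · rintro z ⟨w, -, rfl⟩
    exact w.2
  · exact hHomeo _ _ hs'T (embHomeoImage Topology.IsEmbedding.subtypeVal s')

theorem lemB (hHomeo : ClosedUnderHomeo T) (hW3 : PropW3 T) {κ : Type u} (Y : κ → Type u)
    [∀ k, TopologicalSpace (Y k)] (hne : ∀ k, Nonempty (Y k)) (hT : T (∀ k, Y k))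
    (q : κ → Prop) [DecidablePred q] : T (∀ k : {k // q k}, Y k.1) := by
  have e := Homeomorph.piEquivPiSubtypeProd q Y
  have hprod : T ((∀ k : {k // q k}, Y k.1) × (∀ k : {k // ¬ q k}, Y k.1)) := hHomeo _ _ hT e
  haveI h1 : Nonempty (∀ k : {k // q k}, Y k.1) := ⟨fun k => Classical.choice (hne k.1)⟩
  haveI h2 : Nonempty (∀ k : {k // ¬ q k}, Y k.1) := ⟨fun k => Classical.choice (hne k.1)⟩
  refine hW3 _ _ h1 h2 Set.univ Set.univ_nonempty isOpen_univ Set.univ (fun _ _ => trivial) ?_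
  exact hHomeo _ _ hprod (Homeomorph.Set.univ _).symm

theorem lemC (hHomeo : ClosedUnderHomeo T) (hW3 : PropW3 T) {κ : Type u} (Y : κ → Type u)
    [∀ k, TopologicalSpace (Y k)] (hne : ∀ k, Nonempty (Y k)) (hT : T (∀ k, Y k))
    (k₀ : κ) : T (Y k₀) := by
  classical
  have h := lemB T hHomeo hW3 Y hne hT (fun k => k = k₀)
  letI : Unique {k // k = k₀} := ⟨⟨⟨k₀, rfl⟩⟩, fun a => Subtype.ext a.2⟩
  refine hHomeo _ _ h ?_
  exact { toEquiv := Equiv.piUnique (fun k : {k // k = k₀} => Y k.1)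
          continuous_toFun := continuous_apply _
          continuous_invFun := continuous_pi fun k => by
            obtain ⟨k, rfl⟩ := k
            exact continuous_id }

end Helpers

theorem stmt11 (T : ∀ (X : Type u) [TopologicalSpace X], Prop)
    (hHomeo : ClosedUnderHomeo T) (hFinProd : ClosedUnderFinProd T)
    (hProd : ∀ (ι : Type u) (Y : ι → Type u) [∀ i, TopologicalSpace (Y i)],
      (∀ i, T (Y i)) → T (∀ i, Y i))
    (hW2 : PropW2 T) (hW3 : PropW3 T)
    (I : Type u) (X : I → Type u) [∀ i, TopologicalSpace (X i)]
    (hne : Nonempty (∀ i, X i)) :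
    IsLocalT T (∀ i, X i) ↔
      ∀ J : Set I, J.Countable → J.Nonempty → IsLocalT T (∀ j : J, X j.1) := by
  classical
  have x0 : ∀ i, X i := Classical.choice hne
  haveI hXne : ∀ i, Nonempty (X i) := fun i => ⟨x0 i⟩
  constructor
  · -- forward direction
    intro hX J _ _ y U hU
    obtain ⟨P, hPU, hPo, hyP⟩ := mem_nhds_iff.1 hU
    set p : I → Prop := fun i => i ∈ J with hp
    set xhat : ∀ i, X i := fun i => if h : p i then y ⟨i, h⟩ else x0 i with hxhat
    have hrestr : restr X p xhat = y := funext fun j => dif_pos j.2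
    have hcylP : cyl X p P ∈ nhds xhat :=
      cyl_mem_nhds X p (by rw [hrestr]; exact hPo.mem_nhds hyP)
    obtain ⟨V, hVn, hVP, hVT⟩ := hX xhat _ hcylP
    set e := Homeomorph.piEquivPiSubtypeProd p X with he
    set S := ⇑e '' V with hSdef
    have hSn : S ∈ nhds (e xhat) := by
      rw [show nhds (e xhat) = Filter.map e (nhds xhat) from (e.map_nhds_eq xhat).symm]
      exact Filter.image_mem_map hVn
    have hexhat : e xhat = (y, fun j : {i // ¬ p i} => xhat j.1) := by
      rw [← hrestr]; rfl
    rw [hexhat] at hSn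
    have hSP : S ⊆ P ×ˢ Set.univ := by
      rintro _ ⟨v, hv, rfl⟩
      exact ⟨hVP hv, trivial⟩
    have hST : T ↥S := hHomeo _ _ hVT (e.image V)
    obtain ⟨s, hsn, hsP, hsT⟩ := lemA T hHomeo hW2 hPo hyP _ hSn hSP hST
    exact ⟨s, hsn, hsP.trans hPU, hsT⟩
  · -- backward direction
    intro h
    have hBad : {i | ¬ T (X i)}.Finite := by
      by_contra hinf
      have hinf : {i | ¬ T (X i)}.Infinite := hinf
      have f := Set.Infinite.natEmbedding _ hinf
      set J : Set I := Set.range fun n => (f n).1 with hJ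
      have hJBad : J ⊆ {i | ¬ T (X i)} := by rintro _ ⟨n, rfl⟩; exact (f n).2
      have hJc : J.Countable := Set.countable_range _
      have hJinf : J.Infinite :=
        Set.infinite_range_of_injective fun m n hmn => f.injective (Subtype.ext hmn)
      have hJne : J.Nonempty := ⟨(f 0).1, ⟨0, rfl⟩⟩
      have hL := h J hJc hJne
      set y : ∀ j : J, X j.1 := fun j => x0 j.1 with hy
      obtain ⟨V, hVn, -, hVT⟩ := hL y Set.univ Filter.univ_mem
      obtain ⟨G, O, hGfin, hOo, hyO, hGO⟩ := exists_finite_pi_subset hVn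
      haveI : Finite {j : ↥J // j ∈ G} := hGfin.to_subtype
      set eJ := (Homeomorph.piEquivPiSubtypeProd (fun j : ↥J => j ∈ G)
        (fun j : ↥J => X j.1)).trans (Homeomorph.prodComm _ _) with heJ
      have hTA : T (∀ j : {j : ↥J // ¬ j ∈ G}, X j.1.1) := by
        refine hW3 _ _ ⟨fun j => x0 j.1.1⟩ ⟨fun j => x0 j.1.1⟩
          (Set.univ.pi fun j : {j : ↥J // j ∈ G} => O j.1) ⟨fun j => y j.1, fun j _ => hyO j.1⟩
          (isOpen_set_pi Set.finite_univ fun j _ => hOo j.1) (⇑eJ '' V) ?_ ?_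
        · rintro ⟨a, b⟩ ⟨-, hb⟩
          refine ⟨eJ.symm (a, b), ?_, by simp⟩
          apply hGO
          intro j hjG
          have hval : eJ.symm (a, b) j = b ⟨j, hjG⟩ := by
            simp [heJ, Homeomorph.piEquivPiSubtypeProd, Equiv.piEquivPiSubtypeProd, hjG]
          rw [hval]
          exact hb ⟨j, hjG⟩ trivial
        · exact hHomeo _ _ hVT (eJ.image V)
      haveI : Infinite ↥J := hJinf.to_subtype
      obtain ⟨jstar, hjstar⟩ := hGfin.exists_notMem
      have hTX : T (X jstar.1) :=
        lemC T hHomeo hW3 (fun j : {j : ↥J // ¬ j ∈ G} => X j.1.1) (fun j => ⟨x0 _⟩) hTA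
          ⟨jstar, hjstar⟩
      exact hJBad jstar.2 hTX
    intro x U hU
    obtain ⟨F, O, hFfin, hOo, hxO, hFO⟩ := exists_finite_pi_subset hU
    set K : Set I := F ∪ {i | ¬ T (X i)} with hK
    have hKfin : K.Finite := hFfin.union hBad
    rcases K.eq_empty_or_nonempty with hKe | hKne
    · have hTX : ∀ i, T (X i) := fun i => by
        by_contra hTi
        exact absurd (hKe ▸ (show i ∈ K from Or.inr hTi)) (Set.notMem_empty i)
      refine ⟨Set.univ, Filter.univ_mem, ?_, ?_⟩
      · intro z _
        apply hFO
        intro i hi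
        exact absurd (hKe ▸ (show i ∈ K from Or.inl hi)) (Set.notMem_empty i)
      · exact hHomeo _ _ (hProd I X hTX) (Homeomorph.Set.univ _).symm
    · have hL := h K hKfin.countable hKne
      haveI : Finite ↥K := hKfin.to_subtype
      set p : I → Prop := fun i => i ∈ K with hp
      set y : ∀ j : K, X j.1 := fun j => x j.1 with hy
      set OO : ∀ j : ↥K, Set (X j.1) := fun j => if h : j.1 ∈ F then O j.1 else Set.univ
        with hOO
      have hQo : IsOpen (Set.univ.pi OO) := isOpen_set_pi Set.finite_univ fun j _ => by
        simp only [hOO]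
        split_ifs
        exacts [hOo _, isOpen_univ]
      have hyQ : y ∈ Set.univ.pi OO := fun j _ => by
        simp only [hOO, hy]
        split_ifs with hj
        exacts [hxO j.1, trivial]
      obtain ⟨V, hVn, hVQ, hVT⟩ := hL y _ (hQo.mem_nhds hyQ)
      refine ⟨cyl X p V, cyl_mem_nhds X p (by exact hVn), ?_, ?_⟩
      · intro z hz
        apply hFO
        intro i hiF
        have hiK : i ∈ K := Or.inl hiF
        have hmem := hVQ hz ⟨i, hiK⟩ trivial
        simp only [hOO] at hmem
        rwa [dif_pos hiF] at hmem
      · refine T_cyl X p T hHomeo hFinProd hVT (hProd _ _ fun j => ?_)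
        by_contra hTj
        exact j.2 (Or.inr hTj)
end

section
/- Let 𝒯 be a class of topological spaces closed under homeomorphic images and finite products, satisfying (W2) and (W3), and suppose there is an uncountable cardinal κ such that a product belongs to 𝒯 if and only if every subproduct by fewer than κ factors belongs to 𝒯. Then a nonempty product X = ∏_{i∈I} X_i is a local 𝒯-space if and only if every subproduct by fewer than κ factors is a local 𝒯-space. -/
universe u

/-! ### Auxiliary definitions and lemmas -/

open Set

namespace Stmt12Aux

lemma contCast {I : Type u} (Y : I → Type u) [∀ i, TopologicalSpace (Y i)] {a b : I} (h : a = b) :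
    Continuous (cast (congrArg Y h) : Y a → Y b) := by subst h; exact continuous_id

def subHomeo {X : Type u} [TopologicalSpace X] {s t : Set X} (h : s ⊆ t) :
    ↥(Subtype.val ⁻¹' s : Set ↥t) ≃ₜ ↥s where
  toFun a := ⟨a.1.1, a.2⟩
  invFun b := ⟨⟨b.1, h b.2⟩, b.2⟩
  left_inv _ := rfl
  right_inv _ := rfl
  continuous_toFun := (continuous_subtype_val.comp continuous_subtype_val).subtype_mk _
  continuous_invFun := (continuous_subtype_val.subtype_mk _).subtype_mk _

def prodUnivHomeo {A B : Type u} [TopologicalSpace A] [TopologicalSpace B] (s : Set A) :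
    ↥(s ×ˢ (univ : Set B)) ≃ₜ ↥s × B where
  toFun z := (⟨z.1.1, z.2.1⟩, z.1.2)
  invFun p := ⟨(p.1.1, p.2), ⟨p.1.2, trivial⟩⟩
  left_inv _ := rfl
  right_inv _ := rfl
  continuous_toFun := ((continuous_fst.comp continuous_subtype_val).subtype_mk _).prodMk
    (continuous_snd.comp continuous_subtype_val)
  continuous_invFun := ((continuous_subtype_val.comp continuous_fst).prodMk continuous_snd).subtype_mk _

section PiHomeos
variable {I : Type u} (X : I → Type u) [∀ i, TopologicalSpace (X i)]

def pxOfSub {K : Set I} (J : Set ↥K) :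
    (∀ j : J, X j.1.1) ≃ₜ (∀ j : (Subtype.val '' J : Set I), X j.1) where
  toFun f i := f ⟨⟨i.1, by obtain ⟨a, _, he⟩ := i.2; exact he ▸ a.2⟩, by
    obtain ⟨a, ha, he⟩ := i.2
    have : a = ⟨i.1, by exact he ▸ a.2⟩ := Subtype.ext he
    exact this ▸ ha⟩
  invFun g j := g ⟨j.1.1, mem_image_of_mem _ j.2⟩
  left_inv f := by funext j; obtain ⟨⟨jv, hK⟩, hJ⟩ := j; rfl
  right_inv g := by funext i; obtain ⟨iv, hi⟩ := i; rfl
  continuous_toFun := continuous_pi fun i => continuous_apply _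
  continuous_invFun := continuous_pi fun j => continuous_apply _

def pxSingle (i0 : I) : (∀ j : ({i0} : Set I), X j.1) ≃ₜ X i0 where
  toFun f := f ⟨i0, rfl⟩
  invFun x j := cast (congrArg X (show j.1 = i0 from j.2).symm) x
  left_inv f := by
    funext j
    obtain ⟨jv, hj⟩ := j
    have h : jv = i0 := hj
    subst h
    rfl
  right_inv x := rfl
  continuous_toFun := continuous_apply _
  continuous_invFun := continuous_pi fun j => contCast X (show j.1 = i0 from j.2).symm

def pxCast {J K : Set I} (h : J = K) : (∀ j : J, X j.1) ≃ₜ (∀ j : K, X j.1) := by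
  subst h; exact Homeomorph.refl _

def pxGlue (J : Set I) (p : I → Prop) [DecidablePred p] :
    ((∀ j : ({i | i ∈ J ∧ p i} : Set I), X j.1) × (∀ j : ({i | i ∈ J ∧ ¬ p i} : Set I), X j.1))
      ≃ₜ (∀ j : J, X j.1) where
  toFun z j := if h : p j.1 then z.1 ⟨j.1, ⟨j.2, h⟩⟩ else z.2 ⟨j.1, ⟨j.2, h⟩⟩
  invFun f := (fun j => f ⟨j.1, j.2.1⟩, fun j => f ⟨j.1, j.2.1⟩)
  left_inv z := by
    ext j
    · exact dif_pos j.2.2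
    · exact dif_neg j.2.2
  right_inv f := by
    funext j; by_cases h : p j.1
    · exact dif_pos h
    · exact dif_neg h
  continuous_toFun := continuous_pi fun j => by
    by_cases h : p j.1
    · simp only [dif_pos h]; exact (continuous_apply _).comp continuous_fst
    · simp only [dif_neg h]; exact (continuous_apply _).comp continuous_snd
  continuous_invFun :=
    (continuous_pi fun j => continuous_apply _).prodMk (continuous_pi fun j => continuous_apply _)

def pxGlueTop (p : I → Prop) [DecidablePred p] :
    ((∀ j : ({i | p i} : Set I), X j.1) × (∀ j : ({i | ¬ p i} : Set I), X j.1))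
      ≃ₜ (∀ i, X i) where
  toFun z i := if h : p i then z.1 ⟨i, h⟩ else z.2 ⟨i, h⟩
  invFun f := (fun j => f j.1, fun j => f j.1)
  left_inv z := by
    ext j
    · exact dif_pos j.2
    · exact dif_neg j.2
  right_inv f := by
    funext i; by_cases h : p i
    · exact dif_pos h
    · exact dif_neg h
  continuous_toFun := continuous_pi fun i => by
    by_cases h : p i
    · simp only [dif_pos h]; exact (continuous_apply _).comp continuous_fst
    · simp only [dif_neg h]; exact (continuous_apply _).comp continuous_snd
  continuous_invFun :=
    (continuous_pi fun j => continuous_apply _).prodMk (continuous_pi fun j => continuous_apply _)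

def boxHomeo [DecidableEq I] (E : Finset I) (V : ∀ i, Set (X i)) :
    ↥((E : Set I).pi V) ≃ₜ ((∀ i : ↥E, ↥(V i.1)) × (∀ j : ({i | i ∉ (E : Set I)} : Set I), X j.1)) where
  toFun z := (fun i => ⟨z.1 i.1, z.2 i.1 i.2⟩, fun j => z.1 j.1)
  invFun p := ⟨fun i => if h : i ∈ E then (p.1 ⟨i, h⟩).1 else p.2 ⟨i, h⟩, fun i hi => by
    have hi' : i ∈ E := hi
    have heq : (if h : i ∈ E then ((p.1 ⟨i, h⟩ : ↥(V i)) : X i) else p.2 ⟨i, h⟩)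
        = ((p.1 ⟨i, hi'⟩ : ↥(V i)) : X i) := dif_pos hi'
    show (if h : i ∈ E then ((p.1 ⟨i, h⟩ : ↥(V i)) : X i) else p.2 ⟨i, h⟩) ∈ V i
    rw [heq]
    exact (p.1 ⟨i, hi'⟩).2⟩
  left_inv z := by
    apply Subtype.ext
    funext i
    by_cases h : i ∈ E
    · exact dif_pos h
    · exact dif_neg h
  right_inv p := by
    ext j
    · exact dif_pos j.2
    · exact dif_neg j.2
  continuous_toFun :=
    (continuous_pi fun i => ((continuous_apply _).comp continuous_subtype_val).subtype_mk _).prodMk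
      (continuous_pi fun j => (continuous_apply _).comp continuous_subtype_val)
  continuous_invFun := Continuous.subtype_mk (continuous_pi fun i => by
    by_cases h : i ∈ E
    · simp only [dif_pos h]
      exact continuous_subtype_val.comp ((continuous_apply _).comp continuous_fst)
    · simp only [dif_neg h]
      exact (continuous_apply _).comp continuous_snd) _

def emptyPiHomeo (Z : I → Type u) [∀ i, TopologicalSpace (Z i)] :
    (∀ i : ↥(∅ : Finset I), Z i.1) ≃ₜ PUnit.{u+1} where
  toFun _ := PUnit.unit
  invFun _ := fun i => absurd i.2 (Finset.notMem_empty _)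
  left_inv f := by funext i; exact absurd i.2 (Finset.notMem_empty _)
  right_inv p := rfl
  continuous_toFun := continuous_const
  continuous_invFun := continuous_pi fun i => absurd i.2 (Finset.notMem_empty _)

def insertPiHomeo (Z : I → Type u) [∀ i, TopologicalSpace (Z i)] [DecidableEq I]
    (a : I) (s : Finset I) (ha : a ∉ s) :
    (∀ i : ↥(insert a s), Z i.1) ≃ₜ (Z a × ∀ i : ↥s, Z i.1) where
  toFun f := (f ⟨a, Finset.mem_insert_self a s⟩, fun i => f ⟨i.1, Finset.mem_insert_of_mem i.2⟩)
  invFun p i := if h : i.1 = a then cast (congrArg Z h.symm) p.1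
    else p.2 ⟨i.1, by rcases Finset.mem_insert.1 i.2 with h' | h'; exact absurd h' h; exact h'⟩
  left_inv f := by
    funext i
    obtain ⟨iv, hiv⟩ := i
    by_cases h : iv = a
    · subst h; simp only [dif_pos rfl]; rfl
    · simp only [dif_neg h]
  right_inv p := by
    refine Prod.ext (dif_pos rfl) (funext fun i => ?_)
    exact dif_neg (fun he : i.1 = a => ha (he ▸ i.2))
  continuous_toFun := (continuous_apply _).prodMk (continuous_pi fun i => continuous_apply _)
  continuous_invFun := continuous_pi fun i => by
    by_cases h : i.1 = a
    · simp only [dif_pos h]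
      exact (contCast Z h.symm).comp continuous_fst
    · simp only [dif_neg h]
      exact (continuous_apply _).comp continuous_snd

end PiHomeos

section TLemmas
variable {T : ∀ (X : Type u) [TopologicalSpace X], Prop}

lemma localT_congr (hHomeo : ClosedUnderHomeo T) {X Y : Type u} [TopologicalSpace X]
    [TopologicalSpace Y] (e : X ≃ₜ Y) (h : IsLocalT T X) : IsLocalT T Y := by
  intro y U hU
  obtain ⟨V, hV, hVU, hTV⟩ := h (e.symm y) (e ⁻¹' U) (e.continuous.continuousAt.preimage_mem_nhds
    (by simpa using hU))
  refine ⟨e '' V, ?_, ?_, ?_⟩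
  · have h2 := e.isOpenEmbedding.isOpenMap.image_mem_nhds hV
    rwa [e.apply_symm_apply] at h2
  · rintro _ ⟨v, hv, rfl⟩
    simpa using hVU hv
  · exact hHomeo _ _ hTV (e.image V)

lemma tPUnit (hW3 : PropW3 T) (hHomeo : ClosedUnderHomeo T) {C : Type u} [TopologicalSpace C]
    (hC : T C) (hne : Nonempty C) : T PUnit.{u+1} := by
  refine hW3 PUnit C ⟨PUnit.unit⟩ hne univ univ_nonempty isOpen_univ univ (fun z _ => trivial) ?_
  exact hHomeo _ _ hC ((Homeomorph.punitProd C).symm.trans (Homeomorph.Set.univ _).symm)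

lemma localT_factor (hHomeo : ClosedUnderHomeo T) (hW2 : PropW2 T)
    {A B : Type u} [TopologicalSpace A] [TopologicalSpace B] (hB : Nonempty B)
    (h : IsLocalT T (A × B)) : IsLocalT T A := by
  intro a U hU
  obtain ⟨b⟩ := hB
  have hiU : interior U ∈ nhds a := interior_mem_nhds.2 hU
  have haiU : a ∈ interior U := mem_interior_iff_mem_nhds.2 hU
  obtain ⟨W, hW, hWsub, hTW⟩ := h (a, b) (interior U ×ˢ (univ : Set B))
    (prod_mem_nhds hiU Filter.univ_mem)
  set W₀ : Set ↥(interior U ×ˢ (univ : Set B)) := Subtype.val ⁻¹' W with hW₀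
  have hTW₀ : T ↥W₀ := hHomeo _ _ hTW (subHomeo hWsub).symm
  have hW₀n : W₀ ∈ nhds (⟨(a, b), ⟨haiU, trivial⟩⟩ : ↥(interior U ×ˢ (univ : Set B))) := by
    rw [nhds_subtype]
    exact Filter.preimage_mem_comap hW
  set g := prodUnivHomeo (B := B) (interior U)
  have hTS : T ↥(g '' W₀) := hHomeo _ _ hTW₀ (g.image W₀)
  have hSn : g '' W₀ ∈ nhds ((⟨a, haiU⟩ : ↥(interior U)), b) :=
    g.isOpenEmbedding.isOpenMap.image_mem_nhds hW₀n
  obtain ⟨s, hs, hTs⟩ := hW2 ↥(interior U) B ⟨a, haiU⟩ b (g '' W₀) hSn hTS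
  refine ⟨Subtype.val '' s, ?_, ?_, ?_⟩
  · exact isOpen_interior.isOpenMap_subtype_val.image_mem_nhds hs
  · rintro _ ⟨v, hv, rfl⟩
    exact interior_subset v.2
  · have hsub : Subtype.val '' s ⊆ interior U := by rintro _ ⟨v, _, rfl⟩; exact v.2
    have hpre : Subtype.val ⁻¹' (Subtype.val '' s) = s := Subtype.val_injective.preimage_image s
    exact hHomeo _ _ hTs (hpre ▸ (subHomeo hsub).symm).symm

lemma tFinsetPi (hHomeo : ClosedUnderHomeo T) (hFinProd : ClosedUnderFinProd T)
    (hpu : T PUnit.{u+1}) {I : Type u} (Z : I → Type u) [∀ i, TopologicalSpace (Z i)]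
    (E : Finset I) (hZ : ∀ i ∈ E, T (Z i)) : T (∀ i : ↥E, Z i.1) := by
  classical
  induction E using Finset.induction_on with
  | empty => exact hHomeo _ _ hpu (emptyPiHomeo Z).symm
  | @insert a s ha ih =>
    exact hHomeo _ _ (hFinProd _ _ (hZ a (Finset.mem_insert_self a s))
      (ih fun i hi => hZ i (Finset.mem_insert_of_mem hi)))
      (insertPiHomeo Z a s ha).symm

end TLemmas

variable {T : ∀ (X : Type u) [TopologicalSpace X], Prop}

lemma tailOfLocal (hHomeo : ClosedUnderHomeo T) (hW3 : PropW3 T)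
    {I : Type u} (X : I → Type u) [∀ i, TopologicalSpace (X i)] (J : Set I)
    (hl : IsLocalT T (∀ j : J, X j.1)) (hne : ∀ i, Nonempty (X i)) :
    ∃ G : Finset I, (↑G : Set I) ⊆ J ∧ T (∀ j : (J \ ↑G : Set I), X j.1) := by
  classical
  set y : ∀ j : J, X j.1 := fun j => (hne j.1).some with hy
  obtain ⟨S, hS, -, hTS⟩ := hl y univ Filter.univ_mem
  rw [nhds_pi, Filter.mem_pi'] at hS
  obtain ⟨Fin, t, ht, hsub⟩ := hS
  set G : Finset I := Fin.image Subtype.val with hG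
  have hGJ : (↑G : Set I) ⊆ J := by
    intro i hi
    obtain ⟨a, -, rfl⟩ := Finset.mem_image.1 hi
    exact a.2
  set p : I → Prop := fun i => i ∉ (↑G : Set I) with hp
  set e := pxGlue X J p with he
  have hBfin : ({i | i ∈ J ∧ ¬ p i} : Set I).Finite :=
    G.finite_toSet.subset fun i hi => not_not.1 hi.2
  haveI : Finite ↥({i | i ∈ J ∧ ¬ p i} : Set I) := hBfin.to_subtype
  set Bo : Set (∀ j : ({i | i ∈ J ∧ ¬ p i} : Set I), X j.1) :=
    univ.pi (fun j => interior (t ⟨j.1, j.2.1⟩)) with hBo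
  have hBoOpen : IsOpen Bo := isOpen_set_pi finite_univ (fun j _ => isOpen_interior)
  have hBoNe : Bo.Nonempty := by
    refine ⟨fun j => y ⟨j.1, j.2.1⟩, ?_⟩
    intro j _
    exact mem_interior_iff_mem_nhds.2 (ht _)
  have hTS' : T ↥(e.symm '' S) := hHomeo _ _ hTS (e.symm.image S)
  have hsub' : (univ ×ˢ Bo) ⊆ e.symm '' S := by
    rintro ⟨a, b⟩ ⟨-, hb⟩
    refine ⟨e (a, b), ?_, e.symm_apply_apply _⟩
    apply hsub
    rw [Set.mem_pi]
    intro (j : ↥J) hj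
    have hjG : j.1 ∈ (↑G : Set I) := Finset.mem_coe.2 (Finset.mem_image_of_mem _ hj)
    have hnp : ¬ p j.1 := not_not.2 hjG
    have hval : e (a, b) j = b ⟨j.1, ⟨j.2, hnp⟩⟩ := dif_neg hnp
    rw [hval]
    have hbmem : ∀ jb : ↥({i | i ∈ J ∧ ¬ p i} : Set I), b jb ∈ interior (t ⟨jb.1, jb.2.1⟩) :=
      fun jb => hb jb trivial
    exact interior_subset (hbmem ⟨j.1, ⟨j.2, hnp⟩⟩)
  have hTA := hW3 (∀ j : ({i | i ∈ J ∧ p i} : Set I), X j.1)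
    (∀ j : ({i | i ∈ J ∧ ¬ p i} : Set I), X j.1)
    ⟨fun j => (hne j.1).some⟩ ⟨fun j => (hne j.1).some⟩ Bo hBoNe hBoOpen
    (e.symm '' S) hsub' hTS'
  refine ⟨G, hGJ, hHomeo _ _ hTA (pxCast X ?_)⟩
  ext i
  simp only [Set.mem_setOf_eq, Set.mem_diff, hp]

lemma smallBad (hHomeo : ClosedUnderHomeo T) {κ : Cardinal.{u}}
    {I : Type u} {X : I → Type u} [∀ i, TopologicalSpace (X i)]
    (hchar : ∀ (ι : Type u) (Y : ι → Type u) [∀ i, TopologicalSpace (Y i)],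
      T (∀ i, Y i) ↔ ∀ J : Set ι, Cardinal.mk ↥J < κ → T (∀ j : J, Y j.1))
    {K : Set I} (hK : ¬ T (∀ k : K, X k.1)) :
    ∃ J : Set I, J ⊆ K ∧ Cardinal.mk ↥J < κ ∧ ¬ T (∀ j : J, X j.1) := by
  rw [hchar ↥K (fun k => X k.1)] at hK
  push_neg at hK
  obtain ⟨J₀, hJ₀, hT⟩ := hK
  refine ⟨Subtype.val '' J₀, fun i hi => ?_, ?_, fun hcon => hT ?_⟩
  · obtain ⟨a, -, rfl⟩ := hi
    exact a.2
  · rw [Cardinal.mk_image_eq Subtype.val_injective]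
    exact hJ₀
  · exact hHomeo _ _ hcon (pxOfSub X J₀).symm

lemma hered (hHomeo : ClosedUnderHomeo T) {κ : Cardinal.{u}}
    {I : Type u} {X : I → Type u} [∀ i, TopologicalSpace (X i)]
    (hchar : ∀ (ι : Type u) (Y : ι → Type u) [∀ i, TopologicalSpace (Y i)],
      T (∀ i, Y i) ↔ ∀ J : Set ι, Cardinal.mk ↥J < κ → T (∀ j : J, Y j.1))
    {K J : Set I} (hJK : J ⊆ K) (hK : T (∀ k : K, X k.1)) :
    T (∀ j : J, X j.1) := by
  rw [hchar ↥J (fun j => X j.1)]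
  intro J₁ hJ₁
  have hSK : Subtype.val '' J₁ ⊆ K := by
    rintro i ⟨a, -, rfl⟩
    exact hJK a.2
  set S : Set ↥K := Subtype.val ⁻¹' (Subtype.val '' J₁) with hS
  have himg : Subtype.val '' S = Subtype.val '' J₁ :=
    Set.image_preimage_eq_of_subset (by rw [Subtype.range_val]; exact hSK)
  have hmkS : Cardinal.mk ↥S < κ := by
    have h1 : Cardinal.mk ↥(Subtype.val '' S : Set I) < κ := by
      rw [himg, Cardinal.mk_image_eq Subtype.val_injective]
      exact hJ₁
    rwa [Cardinal.mk_image_eq Subtype.val_injective] at h1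
  have h2 := (hchar ↥K (fun k => X k.1)).1 hK S hmkS
  have h3 : T (∀ j : (Subtype.val '' J₁ : Set I), X j.1) :=
    hHomeo _ _ h2 ((pxOfSub X S).trans (pxCast X himg))
  exact hHomeo _ _ h3 (pxOfSub X J₁).symm

variable {T : ∀ (X : Type u) [TopologicalSpace X], Prop}

lemma tailClaim (hHomeo : ClosedUnderHomeo T) (hFinProd : ClosedUnderFinProd T)
    (hW3 : PropW3 T) {κ : Cardinal.{u}} (hκ : Cardinal.aleph0 < κ)
    {I : Type u} {X : I → Type u} [∀ i, TopologicalSpace (X i)]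
    (hchar : ∀ (ι : Type u) (Y : ι → Type u) [∀ i, TopologicalSpace (Y i)],
      T (∀ i, Y i) ↔ ∀ J : Set ι, Cardinal.mk ↥J < κ → T (∀ j : J, Y j.1))
    (Hloc : ∀ J : Set I, Cardinal.mk ↥J < κ → IsLocalT T (∀ j : J, X j.1))
    (hne : ∀ i, Nonempty (X i)) (F : Finset I) :
    ∃ E : Finset I, F ⊆ E ∧ T (∀ j : (((↑E : Set I))ᶜ : Set I), X j.1) := by
  classical
  by_contra hcon
  push_neg at hcon
  have step : ∀ E : Finset I, ∃ G : Finset I, F ⊆ E →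
      ((↑G : Set I) ⊆ ((↑E : Set I))ᶜ ∧ ¬ T (∀ j : (↑G : Set I), X j.1)) := by
    intro E
    by_cases hFE : F ⊆ E
    · have hbad := hcon E hFE
      obtain ⟨J, hJsub, hJsmall, hJbad⟩ := smallBad hHomeo hchar (K := ((↑E : Set I))ᶜ) hbad
      obtain ⟨G₀, hG₀, hTdiff⟩ := tailOfLocal hHomeo hW3 X J (Hloc J hJsmall) hne
      have hbadG : ¬ T (∀ j : (J ∩ ↑G₀ : Set I), X j.1) := by
        intro hTG
        apply hJbad
        have hA : T (∀ j : ({i | i ∈ J ∧ i ∉ (↑G₀ : Set I)} : Set I), X j.1) :=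
          hHomeo _ _ hTdiff (pxCast X (by ext i; simp [Set.mem_diff]))
        have hB : T (∀ j : ({i | i ∈ J ∧ ¬ i ∉ (↑G₀ : Set I)} : Set I), X j.1) :=
          hHomeo _ _ hTG (pxCast X (by ext i; simp [not_not]))
        exact hHomeo _ _ (hFinProd _ _ hA hB) (pxGlue X J (fun i => i ∉ (↑G₀ : Set I)))
      refine ⟨G₀.filter (fun i => i ∈ J), fun _ => ⟨?_, ?_⟩⟩
      · intro i hi
        rw [Finset.coe_filter] at hi
        exact hJsub hi.2
      · intro hTG
        apply hbadG
        refine hHomeo _ _ hTG (pxCast X ?_)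
        ext i
        simp only [Finset.coe_filter, Set.mem_setOf_eq, Set.mem_inter_iff, Finset.mem_coe]
        tauto
    · exact ⟨∅, fun h => absurd h hFE⟩
  choose g hg using step
  set e : ℕ → Finset I := fun n => Nat.rec F (fun _ En => En ∪ g En) n with he
  have hes : ∀ n, e (n + 1) = e n ∪ g (e n) := fun n => rfl
  have hFe : ∀ n, F ⊆ e n := by
    intro n
    induction n with
    | zero => exact Finset.Subset.refl F
    | succ k ih => exact ih.trans Finset.subset_union_left
  have hmono : ∀ m n, m ≤ n → e m ⊆ e n := by
    intro m n h
    induction h with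
    | refl => exact Finset.Subset.refl _
    | step ih' ih => exact ih.trans Finset.subset_union_left
  have hprop := fun n => hg (e n) (hFe n)
  set Jstar : Set I := ⋃ n, (↑(g (e n)) : Set I) with hJstar
  have hJc : Jstar.Countable := Set.countable_iUnion fun n => (g (e n)).countable_toSet
  have hJsmall : Cardinal.mk ↥Jstar < κ := by
    haveI := hJc.to_subtype
    exact lt_of_le_of_lt Cardinal.mk_le_aleph0 hκ
  obtain ⟨H, hHsub, hTd⟩ := tailOfLocal hHomeo hW3 X Jstar (Hloc _ hJsmall) hne
  set lvl : I → ℕ := fun i => if h : ∃ n, i ∈ g (e n) then h.choose else 0 with hlvl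
  set N : ℕ := (H.sup lvl) + 1 with hN
  have hGN : (↑(g (e N)) : Set I) ⊆ Jstar \ ↑H := by
    intro i hi
    refine ⟨Set.mem_iUnion.2 ⟨N, hi⟩, fun hiH => ?_⟩
    have hiH' : i ∈ H := hiH
    have hex : ∃ n, i ∈ g (e n) := Set.mem_iUnion.1 (hHsub hiH)
    have hlv : i ∈ g (e (lvl i)) := by
      rw [hlvl]
      simp only [dif_pos hex]
      exact hex.choose_spec
    have h1 : lvl i ≤ H.sup lvl := Finset.le_sup hiH'
    have h2 : i ∈ e N := hmono (lvl i + 1) N (by omega)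
      ((hes (lvl i)) ▸ Finset.mem_union_right _ hlv)
    exact (hprop N).1 hi h2
  exact (hprop N).2 (hered hHomeo hchar hGN hTd)

end Stmt12Aux

open Stmt12Aux in
theorem stmt12 (T : ∀ (X : Type u) [TopologicalSpace X], Prop)
    (hHomeo : ClosedUnderHomeo T) (hFinProd : ClosedUnderFinProd T)
    (hW2 : PropW2 T) (hW3 : PropW3 T)
    (κ : Cardinal.{u}) (hκ : Cardinal.aleph0 < κ)
    (hchar : ∀ (ι : Type u) (Y : ι → Type u) [∀ i, TopologicalSpace (Y i)],
      T (∀ i, Y i) ↔ ∀ J : Set ι, Cardinal.mk ↥J < κ → T (∀ j : J, Y j.1))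
    (I : Type u) (X : I → Type u) [∀ i, TopologicalSpace (X i)]
    (hne : Nonempty (∀ i, X i)) :
    IsLocalT T (∀ i, X i) ↔
      ∀ J : Set I, Cardinal.mk ↥J < κ → IsLocalT T (∀ j : J, X j.1) := by
  classical
  obtain ⟨z⟩ := hne
  have hnei : ∀ i, Nonempty (X i) := fun i => ⟨z i⟩
  constructor
  · -- forward: full product local → subproducts local
    intro h J _
    have h2 : IsLocalT T ((∀ j : ({i | i ∈ J} : Set I), X j.1) ×
        (∀ j : ({i | ¬ i ∈ J} : Set I), X j.1)) :=
      localT_congr hHomeo (pxGlueTop X (fun i => i ∈ J)).symm h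
    have h3 := localT_factor (B := (∀ j : ({i | ¬ i ∈ J} : Set I), X j.1)) hHomeo hW2
      ⟨fun j => z j.1⟩ h2
    exact localT_congr hHomeo (pxCast X (Set.setOf_mem_eq (s := J))) h3
  · -- backward
    intro Hloc x U hU
    rw [nhds_pi, Filter.mem_pi'] at hU
    obtain ⟨Fn, t, ht, hsub⟩ := hU
    obtain ⟨E, hFE, hTtail⟩ := tailClaim hHomeo hFinProd hW3 hκ hchar Hloc hnei Fn
    -- choose T-neighborhoods in each coordinate of E
    have hVsel : ∀ i : ↥E, ∃ V, V ∈ nhds (x i.1) ∧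
        V ⊆ (if i.1 ∈ Fn then t i.1 else Set.univ) ∧ T ↥V := by
      intro i
      have hsmall : Cardinal.mk ↥({i.1} : Set I) < κ := by
        haveI := (Set.countable_singleton i.1).to_subtype
        exact lt_of_le_of_lt Cardinal.mk_le_aleph0 hκ
      have hloc : IsLocalT T (X i.1) :=
        localT_congr hHomeo (pxSingle X i.1) (Hloc {i.1} hsmall)
      by_cases h : i.1 ∈ Fn
      · obtain ⟨V, h1, h2, h3⟩ := hloc (x i.1) (t i.1) (ht i.1)
        exact ⟨V, h1, by rw [if_pos h]; exact h2, h3⟩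
      · obtain ⟨V, h1, h2, h3⟩ := hloc (x i.1) Set.univ Filter.univ_mem
        exact ⟨V, h1, by rw [if_neg h]; exact h2, h3⟩
    choose Vsel hV1 hV2 hV3 using hVsel
    set V' : ∀ i, Set (X i) := fun i => if h : i ∈ E then Vsel ⟨i, h⟩ else Set.univ with hV'
    refine ⟨(↑E : Set I).pi V', ?_, ?_, ?_⟩
    · refine set_pi_mem_nhds E.finite_toSet ?_
      intro i hi
      have hi' : i ∈ E := hi
      show (if h : i ∈ E then Vsel ⟨i, h⟩ else Set.univ) ∈ nhds (x i)
      rw [dif_pos hi']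
      exact hV1 ⟨i, hi'⟩
    · intro w hw
      apply hsub
      rw [Set.mem_pi]
      intro i hi
      have hiF : i ∈ Fn := hi
      have hiE : i ∈ E := hFE hiF
      have h1 : w i ∈ V' i := hw i hiE
      rw [hV'] at h1
      simp only [dif_pos hiE] at h1
      have h2 := hV2 ⟨i, hiE⟩
      rw [if_pos hiF] at h2
      exact h2 h1
    · -- T of the box
      have hTbox : T (∀ i : ↥E, ↥(V' i.1)) := by
        refine tFinsetPi hHomeo hFinProd ?_ (fun i => ↥(V' i)) E ?_
        · exact tPUnit hW3 hHomeo hTtail ⟨fun j => z j.1⟩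
        · intro i hi
          have heq : V' i = Vsel ⟨i, hi⟩ := dif_pos hi
          exact hHomeo _ _ (hV3 ⟨i, hi⟩) (Homeomorph.setCongr heq.symm)
      have hTtail' : T (∀ j : ({i | i ∉ (↑E : Set I)} : Set I), X j.1) :=
        hHomeo _ _ hTtail (pxCast X (by ext i; simp))
      exact hHomeo _ _ (hFinProd _ _ hTbox hTtail') (boxHomeo X E V').symm
end

section
/- A nonempty product ∏_{i∈I} X_i of topological spaces is locally Hausdorff if and only if all but finitely many factors are Hausdorff and all the remaining factors are locally Hausdorff. -/
universe u

def LocallyT2 (X : Type u) [TopologicalSpace X] : Prop :=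
  ∀ x : X, ∀ U ∈ nhds x, ∃ V ∈ nhds x, V ⊆ U ∧ T2Space ↥V

theorem stmt13 (I : Type u) (X : I → Type u) [∀ i, TopologicalSpace (X i)]
    (hne : Nonempty (∀ i, X i)) :
    LocallyT2 (∀ i, X i) ↔
      ∃ F : Finset I, (∀ i ∉ F, T2Space (X i)) ∧ ∀ i ∈ F, LocallyT2 (X i) := by
  classical
  constructor
  · intro h
    obtain ⟨x⟩ := hne
    obtain ⟨V, hVn, -, hVT2⟩ := h x Set.univ Filter.univ_mem
    rw [nhds_pi, Filter.mem_pi'] at hVn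
    obtain ⟨F, t, ht, htV⟩ := hVn
    refine ⟨F, ?_, ?_⟩
    · intro i hi
      have hcont : Continuous (fun a : X i => Function.update x i a) :=
        continuous_const.update i continuous_id
      have hmem : ∀ a : X i, Function.update x i a ∈ V := by
        intro a
        apply htV
        intro j hj
        rw [Function.update_of_ne (by rintro rfl; exact hi hj)]
        exact mem_of_mem_nhds (ht j)
      haveI := hVT2
      refine ⟨fun a b hab => ?_⟩
      have hc : Continuous (fun a : X i => (⟨Function.update x i a, hmem a⟩ : V)) :=
        hcont.subtype_mk _
      apply separated_by_continuous hc
      simp only [ne_eq, Subtype.mk.injEq]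
      intro hh
      exact hab (by simpa using congrFun hh i)
    · intro i _ a U hU
      have hcont : Continuous (fun b : X i => Function.update x i b) :=
        continuous_const.update i continuous_id
      have hU' : (fun f : ∀ j, X j => f i) ⁻¹' U ∈ nhds (Function.update x i a) := by
        apply (continuous_apply i).continuousAt.preimage_mem_nhds
        simpa using hU
      obtain ⟨W, hWn, hWU, hWT2⟩ := h (Function.update x i a) _ hU'
      refine ⟨(fun b : X i => Function.update x i b) ⁻¹' W, ?_, ?_, ?_⟩
      · exact hcont.continuousAt.preimage_mem_nhds hWn
      · intro b hb
        have := hWU hb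
        simpa using this
      · haveI := hWT2
        refine ⟨fun p q hpq => ?_⟩
        have hc : Continuous (fun p : ((fun b : X i => Function.update x i b) ⁻¹' W) =>
            (⟨Function.update x i p.1, p.2⟩ : W)) :=
          (hcont.comp continuous_subtype_val).subtype_mk _
        apply separated_by_continuous hc
        simp only [ne_eq, Subtype.mk.injEq]
        intro hh
        apply hpq
        apply Subtype.ext
        simpa using congrFun hh i
  · rintro ⟨F, hT2, hLT2⟩ x U hU
    rw [nhds_pi, Filter.mem_pi'] at hU
    obtain ⟨G, t, ht, htU⟩ := hU
    set t' : ∀ i, Set (X i) := fun i => if i ∈ G then t i else Set.univ with ht'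
    have ht'n : ∀ i, t' i ∈ nhds (x i) := by
      intro i
      simp only [ht']
      split
      · exact ht i
      · exact Filter.univ_mem
    have hex : ∀ i, ∃ V : Set (X i), V ∈ nhds (x i) ∧ V ⊆ t' i ∧ T2Space ↥V := by
      intro i
      by_cases hi : i ∈ F
      · exact hLT2 i hi (x i) (t' i) (ht'n i)
      · haveI := hT2 i hi
        exact ⟨t' i, ht'n i, subset_rfl, inferInstance⟩
    choose V hVn hVt hVT2 using hex
    refine ⟨(↑(F ∪ G) : Set I).pi V, ?_, ?_, ?_⟩
    · exact set_pi_mem_nhds (Finset.finite_toSet _) (fun i _ => hVn i)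
    · intro w hw
      apply htU
      intro i hi
      have h1 : w i ∈ V i := hw i (by simp [hi])
      have h2 : i ∈ G → w i ∈ t i := by simpa [ht'] using hVt i h1
      exact h2 hi
    · refine ⟨fun p q hpq => ?_⟩
      have hne' : p.1 ≠ q.1 := fun hh => hpq (Subtype.ext hh)
      obtain ⟨i, hi⟩ := Function.ne_iff.mp hne'
      by_cases hiS : i ∈ F ∪ G
      · haveI := hVT2 i
        have hc : Continuous (fun r : ((↑(F ∪ G) : Set I).pi V) =>
            (⟨r.1 i, r.2 i (by simpa using hiS)⟩ : V i)) :=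
          ((continuous_apply i).comp continuous_subtype_val).subtype_mk _
        apply separated_by_continuous hc
        simpa [Subtype.ext_iff] using hi
      · haveI : T2Space (X i) := hT2 i (fun hh => hiS (Finset.mem_union_left _ hh))
        exact separated_by_continuous ((continuous_apply i).comp continuous_subtype_val) hi
end

section
/- A nonempty product ∏_{i∈I} X_i of topological spaces is locally finite (every point has, inside every neighborhood, a finite neighborhood) if and only if all but finitely many factors are one-element spaces and the remaining factors are locally finite. Moreover, this holds if and only if every countable subproduct is locally finite. -/
universe u

def LocallyFin (X : Type u) [TopologicalSpace X] : Prop :=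
  ∀ x : X, ∀ U ∈ nhds x, ∃ V ∈ nhds x, V ⊆ U ∧ V.Finite

lemma lf_of_subsingleton (X : Type u) [TopologicalSpace X] [Subsingleton X] :
    LocallyFin X := by
  intro x U hU
  refine ⟨Set.univ, Filter.univ_mem, fun y _ => ?_, Set.finite_univ⟩
  rw [Subsingleton.elim y x]
  exact mem_of_mem_nhds hU

lemma key (I : Type u) (X : I → Type u) [∀ i, TopologicalSpace (X i)]
    (hne : Nonempty (∀ i, X i)) :
    LocallyFin (∀ i, X i) ↔
      {i | ¬ Subsingleton (X i)}.Finite ∧ ∀ i, LocallyFin (X i) := by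
  classical
  constructor
  · intro h
    obtain ⟨p⟩ := hne
    constructor
    · obtain ⟨V, hVn, -, hVf⟩ := h p Set.univ Filter.univ_mem
      obtain ⟨O, hOV, hO, hpO⟩ := mem_nhds_iff.mp hVn
      obtain ⟨F₀, u, hu, hpi⟩ := isOpen_pi_iff.mp hO p hpO
      -- the set of "bad" indices outside F₀
      have hch : ∀ i, i ∉ (F₀ : Set I) ∧ ¬ Subsingleton (X i) → ∃ a : X i, a ≠ p i := by
        rintro i ⟨-, hns⟩
        rw [not_subsingleton_iff_nontrivial] at hns
        exact exists_ne (p i)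
      choose g hg using hch
      set T : Set I := {i | i ∉ (F₀ : Set I) ∧ ¬ Subsingleton (X i)} with hT
      have hTfin : T.Finite := by
        have hinj : Set.InjOn (fun i => if h : i ∈ T then Function.update p i (g i h) else p) T := by
          intro i hi j hj hij
          by_contra hne'
          have heq : Function.update p i (g i hi) = Function.update p j (g j hj) := by
            simpa only [dif_pos hi, dif_pos hj] using hij
          have h1 : Function.update p i (g i hi) i = g i hi := Function.update_self _ _ _
          have h2 : Function.update p j (g j hj) i = p i :=
            Function.update_of_ne (fun hh => hne' hh) _ _
          rw [heq, h2] at h1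
          exact hg i hi h1.symm
        have himg : (fun i => if h : i ∈ T then Function.update p i (g i h) else p) '' T ⊆ V := by
          rintro _ ⟨i, hi, rfl⟩
          simp only [dif_pos hi]
          refine hOV (hpi ?_)
          intro k hk
          have hki : k ≠ i := fun hh => hi.1 (hh ▸ hk)
          rw [Function.update_of_ne hki]
          exact (hu k hk).2
        exact Set.Finite.of_finite_image (hVf.subset himg) hinj
      have : {i | ¬ Subsingleton (X i)} ⊆ (F₀ : Set I) ∪ T := by
        intro i hi
        by_cases hiF : i ∈ (F₀ : Set I)
        · exact Or.inl hiF
        · exact Or.inr ⟨hiF, hi⟩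
      exact (F₀.finite_toSet.union hTfin).subset this
    · intro i₀ x₀ U₀ hU₀
      have hx0 : Function.update p i₀ x₀ i₀ = x₀ := Function.update_self _ _ _
      obtain ⟨V, hVn, hVU, hVf⟩ := h (Function.update p i₀ x₀) ((fun f => f i₀) ⁻¹' U₀)
        ((continuous_apply i₀).continuousAt.preimage_mem_nhds (by rw [hx0]; exact hU₀))
      obtain ⟨O, hOV, hO, hxO⟩ := mem_nhds_iff.mp hVn
      refine ⟨(fun f => f i₀) '' V, ?_, ?_, hVf.image _⟩
      · have hOn : (fun f => f i₀) '' O ∈ nhds x₀ := by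
          rw [← hx0]
          exact (isOpenMap_eval i₀ O hO).mem_nhds ⟨_, hxO, rfl⟩
        exact Filter.mem_of_superset hOn (Set.image_mono hOV)
      · rintro _ ⟨f, hf, rfl⟩
        exact hVU hf
  · rintro ⟨hfin, hlf⟩ x U hU
    obtain ⟨O, hOU, hO, hxO⟩ := mem_nhds_iff.mp hU
    obtain ⟨F₀, u, hu, hpi⟩ := isOpen_pi_iff.mp hO x hxO
    have hW : ∀ i, ∃ W ∈ nhds (x i), W ⊆ (if i ∈ F₀ then u i else Set.univ) ∧ W.Finite := by
      intro i
      by_cases hi : i ∈ F₀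
      · obtain ⟨W, h1, h2, h3⟩ := hlf i (x i) (u i) ((hu i hi).1.mem_nhds (hu i hi).2)
        exact ⟨W, h1, by rwa [if_pos hi], h3⟩
      · obtain ⟨W, h1, h2, h3⟩ := hlf i (x i) Set.univ Filter.univ_mem
        exact ⟨W, h1, by rwa [if_neg hi], h3⟩
    choose W hWn hWu hWf using hW
    set F₁ : Set I := (F₀ : Set I) ∪ {i | ¬ Subsingleton (X i)} with hF₁
    have hF₁fin : F₁.Finite := F₀.finite_toSet.union hfin
    refine ⟨F₁.pi W, set_pi_mem_nhds hF₁fin (fun i _ => hWn i), ?_, ?_⟩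
    · intro f hf
      refine hOU (hpi ?_)
      intro k hk
      have := hf k (Or.inl hk)
      have h2 := hWu k this
      rwa [if_pos (Finset.mem_coe.mp hk)] at h2
    · -- finiteness: coordinates outside F₁ are determined by subsingleton-ness
      haveI := hF₁fin.fintype
      have hinj : Set.InjOn (fun f => fun i : F₁ => f i.1) (F₁.pi W) := by
        intro f hf g hg hfg
        funext i
        by_cases hi : i ∈ F₁
        · exact congrFun hfg ⟨i, hi⟩
        · have hs : Subsingleton (X i) := by
            by_contra hns
            exact hi (Or.inr hns)
          exact hs.elim (f i) (g i)
      have himg : (fun f => fun i : F₁ => f i.1) '' (F₁.pi W) ⊆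
          Set.univ.pi (fun i : F₁ => W i.1) := by
        rintro _ ⟨f, hf, rfl⟩ i _
        exact hf i.1 i.2
      have hfin2 : (Set.univ.pi (fun i : F₁ => W i.1)).Finite :=
        Set.Finite.pi (fun i => hWf i.1)
      exact Set.Finite.of_finite_image (hfin2.subset himg) hinj

theorem stmt14 (I : Type u) (X : I → Type u) [∀ i, TopologicalSpace (X i)]
    (hne : Nonempty (∀ i, X i)) :
    (LocallyFin (∀ i, X i) ↔
      ∃ F : Finset I, (∀ i ∉ F, Nonempty (X i) ∧ Subsingleton (X i)) ∧
        ∀ i ∈ F, LocallyFin (X i)) ∧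
    (LocallyFin (∀ i, X i) ↔
      ∀ J : Set I, J.Countable → LocallyFin (∀ j : J, X j.1)) := by
  have hneJ : ∀ J : Set I, Nonempty (∀ j : J, X j.1) := fun J => ⟨fun j => hne.some j.1⟩
  constructor
  · constructor
    · intro h
      obtain ⟨hfin, hlf⟩ := (key I X hne).mp h
      refine ⟨hfin.toFinset, fun i hi => ?_, fun i _ => hlf i⟩
      rw [Set.Finite.mem_toFinset] at hi
      exact ⟨⟨hne.some i⟩, not_not.mp hi⟩
    · rintro ⟨F, hout, hin⟩
      refine (key I X hne).mpr ⟨F.finite_toSet.subset ?_, fun i => ?_⟩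
      · intro i hi
        by_contra hiF
        exact hi (hout i hiF).2
      · by_cases hiF : i ∈ F
        · exact hin i hiF
        · haveI := (hout i hiF).2
          exact lf_of_subsingleton (X i)
  · constructor
    · intro h J _
      obtain ⟨hfin, hlf⟩ := (key I X hne).mp h
      refine (key J (fun j => X j.1) (hneJ J)).mpr ⟨?_, fun j => hlf j.1⟩
      have : {j : J | ¬ Subsingleton (X j.1)} = Subtype.val ⁻¹' {i | ¬ Subsingleton (X i)} := rfl
      rw [this]
      exact Set.Finite.preimage (Subtype.val_injective.injOn) hfin
    · intro h
      refine (key I X hne).mpr ⟨?_, fun i => ?_⟩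
      · by_contra hinf
        have hS : Set.Infinite {i | ¬ Subsingleton (X i)} := hinf
        set emb := hS.natEmbedding
        set J : Set I := Set.range (fun n => (emb n).1) with hJ
        have hJc : J.Countable := Set.countable_range _
        have hJS : J ⊆ {i | ¬ Subsingleton (X i)} := by
          rintro _ ⟨n, rfl⟩
          exact (emb n).2
        have hJinf : J.Infinite :=
          Set.infinite_range_of_injective (fun a b hab => emb.injective (Subtype.ext hab))
        obtain ⟨hfinJ, -⟩ := (key J (fun j => X j.1) (hneJ J)).mp (h J hJc)
        have : {j : J | ¬ Subsingleton (X j.1)} = Set.univ := by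
          ext j
          simp only [Set.mem_setOf_eq, Set.mem_univ, iff_true]
          exact hJS j.2
        rw [this, Set.finite_univ_iff] at hfinJ
        exact hJinf (Set.toFinite J)
      · obtain ⟨-, hlfJ⟩ :=
          (key ({i} : Set I) (fun j => X j.1) (hneJ {i})).mp (h {i} (Set.countable_singleton i))
        exact hlfJ ⟨i, rfl⟩
end

section
/- A nonempty product ∏_{i∈I} X_i of topological spaces is locally metrizable if and only if all but countably many factors are one-element spaces, all but finitely many factors are metrizable, and the remaining factors are locally metrizable. -/
universe u

open Set Filter Topology TopologicalSpace Function

section Aux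

variable {I : Type u}

/-- Countable product of metrizable spaces is metrizable. -/
theorem aux_pi_metrizable_countable [Countable I] (X : I → Type u) [∀ i, TopologicalSpace (X i)]
    [∀ i, MetrizableSpace (X i)] : MetrizableSpace (∀ i, X i) := by
  letI := fun i => TopologicalSpace.metrizableSpaceMetric (X i)
  exact UniformSpace.metrizableSpace

/-- Product of metrizable spaces, all but countably many of which are subsingletons,
is metrizable. -/
theorem aux_pi_metrizable (X : I → Type u) [∀ i, TopologicalSpace (X i)]
    [∀ i, MetrizableSpace (X i)] (C : Set I) (hC : C.Countable)
    (hs : ∀ i ∉ C, Subsingleton (X i)) : MetrizableSpace (∀ i, X i) := by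
  classical
  haveI : Countable ↥C := hC.to_subtype
  haveI m1 : MetrizableSpace (∀ i : C, X i) := aux_pi_metrizable_countable _
  haveI : ∀ i : {i // ¬ i ∈ C}, Subsingleton (X i) := fun i => hs i i.2
  haveI : Subsingleton (∀ i : {i // ¬ i ∈ C}, X i) := ⟨fun a b => funext fun i => Subsingleton.elim _ _⟩
  haveI m2 : MetrizableSpace (∀ i : {i // ¬ i ∈ C}, X i) := inferInstance
  exact (Homeomorph.piEquivPiSubtypeProd (· ∈ C) X).isEmbedding.metrizableSpace

/-- `univ.pi s` is metrizable whenever `∀ i, s i` is. -/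
theorem aux_univ_pi_metrizable {X : I → Type u} [∀ i, TopologicalSpace (X i)]
    (s : ∀ i, Set (X i)) (h : MetrizableSpace (∀ i, ↥(s i))) :
    MetrizableSpace ↥(Set.univ.pi s) := by
  let e : ↥(Set.univ.pi s) → ∀ i, ↥(s i) := fun y i => ⟨y.1 i, y.2 i trivial⟩
  let g : (∀ i, ↥(s i)) → ↥(Set.univ.pi s) := fun z => ⟨fun i => (z i).1, fun i _ => (z i).2⟩
  have hg : Continuous g :=
    Continuous.subtype_mk (continuous_pi fun i => continuous_subtype_val.comp (continuous_apply i)) _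
  have he : Continuous e :=
    continuous_pi fun i => Continuous.subtype_mk ((continuous_apply i).comp continuous_subtype_val) _
  have hinv : Function.LeftInverse g e := fun y => rfl
  exact (Topology.IsEmbedding.of_leftInverse hinv hg he).metrizableSpace

def LocallyMetrizable' (X : Type u) [TopologicalSpace X] : Prop :=
  ∀ x : X, ∀ U ∈ nhds x, ∃ V ∈ nhds x, V ⊆ U ∧ TopologicalSpace.MetrizableSpace ↥V

/-- If the product is locally metrizable, so is each factor. -/
theorem aux_factor (X : I → Type u) [∀ i, TopologicalSpace (X i)] (y : ∀ i, X i)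
    (h : LocallyMetrizable' (∀ i, X i)) (i : I) : LocallyMetrizable' (X i) := by
  classical
  intro a U hU
  set x : ∀ j, X j := Function.update y i a with hx
  have hxi : x i = a := Function.update_self i a y
  have hU' : (fun z : ∀ j, X j => z i) ⁻¹' U ∈ 𝓝 x :=
    (continuous_apply i).continuousAt.preimage_mem_nhds (by rw [hxi]; exact hU)
  obtain ⟨V, hV, hVU, hVm⟩ := h x _ hU'
  let f : X i → ∀ j, X j := fun t => Function.update x i t
  have hfc : Continuous f := continuous_const.update i continuous_id
  have hfa : f a = x := by
    simp only [f, hx, Function.update_idem]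
  have hfemb : Topology.IsEmbedding f :=
    Topology.IsEmbedding.of_leftInverse (f := fun z : ∀ j, X j => z i)
      (fun t => Function.update_self i t x) (continuous_apply i) hfc
  refine ⟨f ⁻¹' V, hfc.continuousAt.preimage_mem_nhds (by rw [hfa]; exact hV), ?_, ?_⟩
  · intro t ht
    have : f t ∈ (fun z : ∀ j, X j => z i) ⁻¹' U := hVU ht
    simpa [f, Function.update_self] using this
  · haveI := hVm
    have : Topology.IsEmbedding fun t : ↥(f ⁻¹' V) => (⟨f t.1, t.2⟩ : ↥V) :=
      (hfemb.comp Topology.IsEmbedding.subtypeVal).codRestrict _ _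
    exact this.metrizableSpace

end Aux

def LocallyMetrizable (X : Type u) [TopologicalSpace X] : Prop :=
  ∀ x : X, ∀ U ∈ nhds x, ∃ V ∈ nhds x, V ⊆ U ∧ TopologicalSpace.MetrizableSpace ↥V

set_option maxHeartbeats 1000000 in
set_option synthInstance.maxHeartbeats 200000 in
theorem stmt15 (I : Type u) (X : I → Type u) [∀ i, TopologicalSpace (X i)]
    (hne : Nonempty (∀ i, X i)) :
    LocallyMetrizable (∀ i, X i) ↔
      ((∃ C : Set I, C.Countable ∧ ∀ i ∉ C, Nonempty (X i) ∧ Subsingleton (X i)) ∧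
       ∃ F : Finset I, (∀ i ∉ F, TopologicalSpace.MetrizableSpace (X i)) ∧
         ∀ i ∈ F, LocallyMetrizable (X i)) := by
  classical
  constructor
  · intro h
    obtain ⟨x⟩ := hne
    obtain ⟨V, hV, -, hVm⟩ := h x Set.univ Filter.univ_mem
    have hVpi : V ∈ Filter.pi (fun i => 𝓝 (x i)) := by rw [← nhds_pi]; exact hV
    obtain ⟨S, hSfin, t, ht, htV⟩ := Filter.mem_pi.mp hVpi
    -- each factor outside S is metrizable (embeds into V)
    have hmet : ∀ i ∉ S, MetrizableSpace (X i) := by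
      intro i hiS
      haveI := hVm
      have hmem : ∀ a : X i, Function.update x i a ∈ V := by
        intro a
        refine htV fun j hj => ?_
        rw [Function.update_of_ne (by rintro rfl; exact hiS hj)]
        exact mem_of_mem_nhds (ht j)
      have hfemb : Topology.IsEmbedding fun a : X i => Function.update x i a :=
        Topology.IsEmbedding.of_leftInverse (f := fun z : ∀ j, X j => z i)
          (fun a => Function.update_self i a x) (continuous_apply i)
          (continuous_const.update i continuous_id)
      exact (hfemb.codRestrict V hmem).metrizableSpace
    -- countable neighborhood basis at x
    haveI := hVm
    have hmap : Filter.map (Subtype.val : ↥V → ∀ j, X j) (𝓝 (⟨x, mem_of_mem_nhds hV⟩ : ↥V)) = 𝓝 x :=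
      map_nhds_subtype_coe_eq_nhds (mem_of_mem_nhds hV) hV
    haveI : FirstCountableTopology ↥V := inferInstance
    haveI : Filter.IsCountablyGenerated (𝓝 (⟨x, mem_of_mem_nhds hV⟩ : ↥V)) := inferInstance
    haveI : (𝓝 x).IsCountablyGenerated := by
      rw [← hmap]; exact Filter.map.isCountablyGenerated _ _
    obtain ⟨b, hb⟩ := (𝓝 x).exists_antitone_basis
    have hbox : ∀ n : ℕ, ∃ Sn : Set I, Sn.Finite ∧ ∃ tn : ∀ i, Set (X i),
        (∀ i, tn i ∈ 𝓝 (x i)) ∧ Sn.pi tn ⊆ b n := by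
      intro n
      have : b n ∈ Filter.pi (fun i => 𝓝 (x i)) := by rw [← nhds_pi]; exact hb.mem n
      exact Filter.mem_pi.mp this
    choose Sn hSn tn htn htb using hbox
    set C : Set I := (⋃ n, Sn n) ∪ S with hC
    have hCc : C.Countable :=
      ((Set.countable_iUnion fun n => (hSn n).countable).union hSfin.countable)
    refine ⟨⟨C, hCc, ?_⟩, hSfin.toFinset, ?_, ?_⟩
    · intro i hiC
      have hiS : i ∉ S := fun hi => hiC (Or.inr hi)
      have hiU : ∀ n, i ∉ Sn n := fun n hi => hiC (Or.inl (Set.mem_iUnion.mpr ⟨n, hi⟩))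
      haveI hXi := hmet i hiS
      haveI : T2Space (X i) := TopologicalSpace.t2Space_of_metrizableSpace
      refine ⟨⟨x i⟩, ?_⟩
      -- every neighborhood of x i is univ
      have huniv : ∀ u ∈ 𝓝 (x i), u = Set.univ := by
        intro u hu
        have : (fun z : ∀ j, X j => z i) ⁻¹' u ∈ 𝓝 x :=
          (continuous_apply i).continuousAt.preimage_mem_nhds hu
        obtain ⟨n, -, hn⟩ := hb.toHasBasis.mem_iff.mp this
        rw [Set.eq_univ_iff_forall]
        intro a
        have hmem : Function.update x i a ∈ (Sn n).pi (tn n) := by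
          intro j hj
          rw [Function.update_of_ne (by rintro rfl; exact hiU n hj)]
          exact mem_of_mem_nhds (htn n j)
        have := hn (htb n hmem)
        simpa [Function.update_self] using this
      -- metrizable + trivial nhds ⇒ subsingleton
      refine ⟨fun a c => ?_⟩
      have key : ∀ a : X i, a = x i := by
        intro a
        by_contra hax
        obtain ⟨u, v, hu, hv, hau, hxv, huv⟩ := t2_separation hax
        have := huniv v (hv.mem_nhds hxv)
        rw [this] at huv
        exact (Set.disjoint_univ.mp huv ▸ hau : a ∈ (∅ : Set (X i)))
      rw [key a, key c]
    · intro i hi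
      exact hmet i (by simpa using hi)
    · intro i _
      exact aux_factor X x h i
  · rintro ⟨⟨C, hCc, hC⟩, F, hFm, hFl⟩
    intro x U hU
    have hUpi : U ∈ Filter.pi (fun i => 𝓝 (x i)) := by rw [← nhds_pi]; exact hU
    obtain ⟨S, hSfin, t, ht, htU⟩ := Filter.mem_pi.mp hUpi
    set u : ∀ i, Set (X i) := fun i => if i ∈ S then t i else Set.univ with hu
    have hun : ∀ i, u i ∈ 𝓝 (x i) := by
      intro i
      by_cases hi : i ∈ S <;> simp [hu, hi, ht i]
    have hex : ∀ i, ∃ W ∈ 𝓝 (x i), W ⊆ u i ∧ MetrizableSpace ↥W := by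
      intro i
      by_cases hi : i ∈ F
      · exact hFl i hi (x i) (u i) (hun i)
      · haveI := hFm i hi
        exact ⟨u i, hun i, subset_rfl, inferInstance⟩
    choose W hW hWu hWm using hex
    set K : Set I := ↑F ∪ S with hK
    have hKfin : K.Finite := F.finite_toSet.union hSfin
    set V' : ∀ i, Set (X i) := fun i => if i ∈ K then W i else Set.univ with hV'
    refine ⟨K.pi W, set_pi_mem_nhds hKfin fun i _ => hW i, ?_, ?_⟩
    · intro y hy
      refine htU fun i hi => ?_
      have hiK : i ∈ K := Or.inr hi
      have : y i ∈ W i := hy i hiK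
      have := hWu i this
      simpa [hu, hi] using this
    · have hWeq : K.pi W = Set.univ.pi V' := by
        ext y
        simp only [Set.mem_pi, Set.mem_univ, true_implies, hV']
        constructor
        · intro hy i
          by_cases hi : i ∈ K <;> simp [hi, hy i]
        · intro hy i hi
          have := hy i
          rwa [if_pos hi] at this
      rw [hWeq]
      refine aux_univ_pi_metrizable V' ?_
      haveI : ∀ i, MetrizableSpace ↥(V' i) := by
        intro i
        by_cases hi : i ∈ K
        · rw [show V' i = W i by simp [hV', hi]]
          exact hWm i
        · have hiF : i ∉ F := fun h => hi (Or.inl (by exact_mod_cast h))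
          haveI := hFm i hiF
          rw [show V' i = Set.univ by simp [hV', hi]]
          infer_instance
      refine aux_pi_metrizable (fun i => ↥(V' i)) (C ∪ K) (hCc.union hKfin.countable) ?_
      intro i hi
      have hiC : i ∉ C := fun h => hi (Or.inl h)
      have hiK : i ∉ K := fun h => hi (Or.inr h)
      haveI := (hC i hiC).2
      exact ⟨fun a b => Subtype.ext (Subsingleton.elim _ _)⟩
end

section
/- A nonempty product ∏_{i∈I} X_i of topological spaces is locally connected-𝒯 in the sense that every point has, inside every neighborhood, a connected neighborhood, if and only if every factor has this property and there is a finite F ⊆ I such that the subproduct ∏_{i∈I∖F} X_i is connected. -/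
universe u

def LocallyConn (X : Type u) [TopologicalSpace X] : Prop :=
  ∀ x : X, ∀ U ∈ nhds x, ∃ V ∈ nhds x, V ⊆ U ∧ ConnectedSpace ↥V

open Set Filter Topology

/-- Transferring connectedness of a cofinite subproduct to a larger finite complement. -/
theorem aux_conn_mono {I : Type u} (X : I → Type u) [∀ i, TopologicalSpace (X i)]
    (hne : Nonempty (∀ i, X i)) {F G : Finset I} (hFG : F ⊆ G)
    (h : ConnectedSpace (∀ i : {i : I // i ∉ F}, X i.1)) :
    ConnectedSpace (∀ i : {i : I // i ∉ G}, X i.1) := by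
  obtain ⟨f0⟩ := hne
  classical
  have hsurj : Function.Surjective
      (fun (g : ∀ i : {i : I // i ∉ F}, X i.1) (i : {i : I // i ∉ G}) =>
        g ⟨i.1, fun hi => i.2 (hFG hi)⟩) := by
    intro h'
    refine ⟨fun i => if hG : i.1 ∈ G then f0 i.1 else h' ⟨i.1, hG⟩, ?_⟩
    funext i
    simp [i.2]
  exact hsurj.connectedSpace (continuous_pi fun i => continuous_apply _)

theorem stmt16 (I : Type u) (X : I → Type u) [∀ i, TopologicalSpace (X i)]
    (hne : Nonempty (∀ i, X i)) :
    LocallyConn (∀ i, X i) ↔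
      (∀ i, LocallyConn (X i)) ∧
      ∃ F : Finset I, ConnectedSpace (∀ i : {i : I // i ∉ F}, X i.1) := by
  classical
  obtain ⟨f0⟩ := hne
  constructor
  · intro hloc
    constructor
    · -- each factor is locally connected
      intro i x U hU
      set f : ∀ j, X j := Function.update f0 i x with hf
      have hfx : f i = x := Function.update_self i x f0
      have hU' : (fun g : ∀ j, X j => g i) ⁻¹' U ∈ 𝓝 f :=
        (continuous_apply i).continuousAt.preimage_mem_nhds (by rwa [hfx])
      obtain ⟨V, hVn, hVsub, hVc⟩ := hloc f _ hU'
      refine ⟨(fun g : ∀ j, X j => g i) '' V, ?_, ?_, ?_⟩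
      · have := (isOpenMap_eval i).image_mem_nhds hVn
        simpa only [Function.eval, hfx] using this
      · exact Set.image_subset_iff.mpr hVsub
      · exact Subtype.connectedSpace
          ((isConnected_iff_connectedSpace.mpr hVc).image _ (continuous_apply i).continuousOn)
    · -- a cofinite subproduct is connected
      obtain ⟨V, hVn, -, hVc⟩ := hloc f0 univ univ_mem
      rw [nhds_pi] at hVn
      obtain ⟨J, hJf, t, ht, hsub⟩ := Filter.mem_pi.mp hVn
      refine ⟨hJf.toFinset, ?_⟩
      have hsurj : Function.Surjective
          (fun (g : ↥V) (i : {i : I // i ∉ hJf.toFinset}) => g.1 i.1) := by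
        intro h
        have hJ' : ∀ i, i ∈ hJf.toFinset ↔ i ∈ J := fun i => hJf.mem_toFinset
        refine ⟨⟨fun i => if hJ : i ∈ J then f0 i else h ⟨i, by simpa [hJ' i] using hJ⟩, ?_⟩, ?_⟩
        · apply hsub
          intro i hi
          simp only [hi, dif_pos]
          exact mem_of_mem_nhds (ht i)
        · funext i
          have : i.1 ∉ J := by
            have := i.2
            rwa [hJ' i.1] at this
          simp [this]
      exact hsurj.connectedSpace (continuous_pi fun i => (continuous_apply i.1).comp
        continuous_subtype_val)
  · rintro ⟨hloc, F, hF⟩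
    intro f U hU
    rw [nhds_pi] at hU
    obtain ⟨J, hJf, t, ht, hsub⟩ := Filter.mem_pi.mp hU
    set G : Finset I := hJf.toFinset ∪ F with hG
    -- choose connected neighborhoods in each coordinate
    choose V hVn hVsub hVc using fun i => hloc i (f i) (t i) (ht i)
    set W : Set (∀ i, X i) := (↑G : Set I).pi V with hW
    have hWn : W ∈ 𝓝 f := set_pi_mem_nhds G.finite_toSet fun i _ => hVn i
    have hWU : W ⊆ U := by
      intro g hg
      apply hsub
      intro i hi
      have hiG : i ∈ G := by
        simp [hG, hJf.mem_toFinset, hi]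
      exact hVsub i (hg i hiG)
    -- prove W is connected via the splitting homeomorphism
    have hGc : ConnectedSpace (∀ i : {i : I // i ∉ G}, X i.1) :=
      aux_conn_mono X ⟨f0⟩ (Finset.subset_union_right) hF
    let e := Homeomorph.piEquivPiSubtypeProd (· ∈ G) X
    set S : Set ((∀ i : {i // i ∈ G}, X i.1) × (∀ i : {i // ¬ i ∈ G}, X i.1)) :=
      (univ.pi fun i : {i // i ∈ G} => V i.1) ×ˢ univ with hS
    have hSc : IsConnected S := by
      refine IsConnected.prod ?_ ?_
      · exact isConnected_univ_pi.mpr fun i =>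
          isConnected_iff_connectedSpace.mpr (hVc i.1)
      · have := hGc
        exact isConnected_univ
    have hWeq : W = ⇑e ⁻¹' S := by
      ext g
      simp [hW, hS, e, Homeomorph.piEquivPiSubtypeProd, Equiv.piEquivPiSubtypeProd,
        Set.mem_pi, Subtype.forall]
    have hWc : IsConnected W := by
      rw [hWeq]
      exact e.isConnected_preimage.mpr hSc
    exact ⟨W, hWn, hWU, Subtype.connectedSpace hWc⟩
end
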